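/- arXiv:2311.11247 — 5 statements merged into one kernel-verified Lean document; each statement's English description precedes it below -/
import Mathlib

section
/- For every T > 0, the operator 𝓕 has at least one fixed point in C_{T+}; that is, there exists a nonnegative W ∈ C([0,T]; Y) with W(t,x) = H(t,x) + ∫_Ω ∫_0^t A(τ,x,σ) N(σ)(1 − e^{−W(t−τ,σ)}) dτ dσ for all t ∈ [0,T] and a.e. x ∈ Ω. -/
/-!
The fixed point is the limit of the monotone iteration `W₀ = 0`, `W_{k+1} = 𝓕 W_k`. Since
`u ↦ 1 - e^{-u}` is increasing with values in `[0, 1]` on `[0, ∞)`, `𝓕` is monotone on nonnegative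
functions and maps them below a fixed multiple of `a(x)`; so the iterates increase to a pointwise
limit `W`, and dominated convergence with majorant `a(x) b(τ) c(σ) N(σ)` passes the limit through
`𝓕`. Continuity of `W` in `Y` comes from the equation itself: after a translation in time,
`‖W(s) - W(t)‖_Y` is bounded by `‖H(s) - H(t)‖_Y`, the `L¹` modulus of continuity of `A` in time
from Assumption 1(2), and a multiple of `∫_0^{|s-t|} b`.
-/

open MeasureTheory Set Filter Topology Function

theorem exists_isFixedPt_of_monotone_iterate {E : Type*} [TopologicalSpace E]
    [ConditionallyCompleteLattice E] [SupConvergenceClass E] [T2Space E]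
    (Φ : E → E) (P : E → Prop) (x₀ B : E) (hx₀ : P x₀) (hx₀Φ : x₀ ≤ Φ x₀)
    (hP : ∀ V, P V → P (Φ V)) (hB : ∀ V, P V → V ≤ B)
    (hmono : ∀ V V', P V → P V' → V ≤ V' → Φ V ≤ Φ V')
    (hlim : ∀ (V : ℕ → E) (W : E), (∀ k, P (V k)) → Monotone V → Tendsto V atTop (𝓝 W) →
      P W ∧ Tendsto (Φ ∘ V) atTop (𝓝 (Φ W))) :
    ∃ W, P W ∧ IsFixedPt Φ W := by
  set V : ℕ → E := fun k => Φ^[k] x₀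
  have hV_succ (k : ℕ) : V (k + 1) = Φ (V k) := iterate_succ_apply' Φ k x₀
  have hVP (k : ℕ) : P (V k) := by
    induction k with
    | zero => exact hx₀
    | succ k ih => rw [hV_succ]; exact hP _ ih
  have hV_mono : Monotone V := by
    refine monotone_nat_of_le_succ fun k => ?_
    induction k with
    | zero => exact hx₀Φ
    | succ k ih =>
      rw [hV_succ, hV_succ (k + 1)]
      exact hmono _ _ (hVP k) (hVP (k + 1)) ih
  have hV_lim : Tendsto V atTop (𝓝 (⨆ k, V k)) :=
    tendsto_atTop_ciSup hV_mono ⟨B, by rintro _ ⟨k, rfl⟩; exact hB _ (hVP k)⟩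
  obtain ⟨hWP, hΦV⟩ := hlim V _ hVP hV_mono hV_lim
  refine ⟨_, hWP, tendsto_nhds_unique hΦV ?_⟩
  exact (tendsto_add_atTop_iff_nat 1).2 hV_lim |>.congr fun k => hV_succ k

/-- For `τ < 0` only `f (τ + h)` survives, and it vanishes unless `τ + h ∈ [0, |h|]`. -/
theorem integral_abs_comp_add_sub_le {f : ℝ → ℝ} (hf : Integrable f) (hf0 : 0 ≤ f)
    (hf_neg : ∀ τ < 0, f τ = 0) (h : ℝ) :
    ∫ τ, |f (τ + h) - f τ| ≤ (∫ τ in Ici 0, |f (τ + h) - f τ|) + ∫ τ in Icc 0 |h|, f τ := by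
  have hshift : Integrable fun τ => |f (τ + h) - f τ| := ((hf.comp_add_right h).sub hf).abs
  have hwindow : Integrable fun τ => (Icc 0 |h|).indicator f (τ + h) :=
    (hf.indicator measurableSet_Icc).comp_add_right h
  have hpt (τ : ℝ) : |f (τ + h) - f τ| ≤
      (Ici 0).indicator (fun τ => |f (τ + h) - f τ|) τ + (Icc 0 |h|).indicator f (τ + h) := by
    rcases le_or_gt 0 τ with hτ | hτ
    · rw [indicator_of_mem (mem_Ici.2 hτ)]
      exact le_add_of_nonneg_right (indicator_nonneg (fun _ _ => hf0 _) _)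
    · rw [indicator_of_notMem (notMem_Ici.2 hτ), zero_add, hf_neg τ hτ, sub_zero,
        abs_of_nonneg (hf0 _)]
      by_cases hτh : 0 ≤ τ + h
      · rw [indicator_of_mem (show τ + h ∈ Icc 0 |h| from ⟨hτh, by linarith [le_abs_self h]⟩)]
      · rw [hf_neg _ (not_le.1 hτh)]
        exact indicator_nonneg (fun _ _ => hf0 _) _
  calc ∫ τ, |f (τ + h) - f τ|
      ≤ ∫ τ, ((Ici 0).indicator (fun τ => |f (τ + h) - f τ|) τ
          + (Icc 0 |h|).indicator f (τ + h)) :=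
        integral_mono hshift ((hshift.indicator measurableSet_Ici).add hwindow) hpt
    _ = _ := by
      rw [integral_add (hshift.indicator measurableSet_Ici) hwindow,
        integral_indicator measurableSet_Ici,
        integral_add_right_eq_self (fun τ => (Icc 0 |h|).indicator f τ) h,
        integral_indicator measurableSet_Icc]

theorem MeasureTheory.Integrable.tendsto_setIntegral_Icc_zero_abs {b : ℝ → ℝ}
    (hb : Integrable b) : Tendsto (fun h => ∫ τ in Icc 0 |h|, b τ) (𝓝 0) (𝓝 0) := by
  have hprim : Continuous fun h => ∫ τ in (0)..|h|, b τ :=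
    (intervalIntegral.continuous_primitive (fun _ _ => hb.intervalIntegrable) 0).comp
      continuous_abs
  convert hprim.tendsto 0 using 2 with h
  · rw [integral_Icc_eq_integral_Ioc, intervalIntegral.integral_of_le (abs_nonneg h)]
  · simp

theorem one_sub_exp_neg_nonneg {u : ℝ} (hu : 0 ≤ u) : 0 ≤ 1 - Real.exp (-u) :=
  sub_nonneg.2 (Real.exp_le_one_iff.2 (neg_nonpos.2 hu))

theorem one_sub_exp_neg_le_one (u : ℝ) : 1 - Real.exp (-u) ≤ 1 :=
  sub_le_self _ (Real.exp_pos _).le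

theorem monotone_one_sub_exp_neg : Monotone fun u : ℝ => 1 - Real.exp (-u) :=
  fun _ _ h => sub_le_sub_left (Real.exp_le_exp.2 (neg_le_neg h)) 1

noncomputable def shiftDefect {X : Type*} (A : ℝ → X → X → ℝ) (h : ℝ) (x σ : X) : ℝ :=
  ∫ τ in Ici 0, |A (τ + h) x σ - A τ x σ|

theorem shiftDefect_nonneg {X : Type*} (A : ℝ → X → X → ℝ) (h : ℝ) (x σ : X) :
    0 ≤ shiftDefect A h x σ :=
  setIntegral_nonneg measurableSet_Ici fun _ _ => abs_nonneg _

variable {X : Type*} [MeasurableSpace X]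

/-- The upper half of Assumption 1(1), with `α` absorbed into `a` and `b` extended by zero to
negative times. -/
structure IsDominatedKernel (μ : Measure X) (Ω : Set X) (N : X → ℝ) (A : ℝ → X → X → ℝ)
    (a : X → ℝ) (b : ℝ → ℝ) (c : X → ℝ) : Prop where
  measurableSet : MeasurableSet Ω
  measurable_N : Measurable N
  N_nonneg : ∀ x, 0 ≤ N x
  measurable_A : Measurable fun p : ℝ × X × X => A p.1 p.2.1 p.2.2
  A_nonneg : ∀ τ x σ, 0 ≤ A τ x σ
  A_of_neg : ∀ τ < 0, ∀ x σ, A τ x σ = 0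
  A_le : ∀ τ, ∀ x ∈ Ω, ∀ σ ∈ Ω, A τ x σ ≤ a x * b τ * c σ
  a_nonneg : ∀ x, 0 ≤ a x
  b_nonneg : ∀ τ, 0 ≤ b τ
  c_nonneg : ∀ σ, 0 ≤ c σ
  integrable_b : Integrable b
  integrableOn_aN : IntegrableOn (fun x => a x * N x) Ω μ
  integrableOn_cN : IntegrableOn (fun σ => c σ * N σ) Ω μ

/-- The time integral runs over all of `ℝ`, so that a time shift can be moved from `ψ` onto the
kernel by translation invariance; for `ψ` vanishing at negative times it is the paper's `∫_0^t`
(`kernelConv_eq_setIntegral_Icc`). -/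
noncomputable def kernelConv (μ : Measure X) (Ω : Set X) (N : X → ℝ) (A : ℝ → X → X → ℝ)
    (ψ : ℝ → X → ℝ) (t : ℝ) (x : X) : ℝ :=
  ∫ σ in Ω, (∫ τ, A τ x σ * N σ * ψ (t - τ) σ) ∂μ

/-- The operator `𝓕`, cut off to `0` outside `[0, ∞) × Ω`: this keeps every iterate zero at
negative times and bounded by a multiple of `a` everywhere. -/
noncomputable def renewalOp (μ : Measure X) (Ω : Set X) (N : X → ℝ) (A : ℝ → X → X → ℝ)
    (H V : ℝ → X → ℝ) (t : ℝ) (x : X) : ℝ :=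
  (Ici 0 ×ˢ Ω).indicator
    (uncurry H + uncurry (kernelConv μ Ω N A fun s σ => 1 - Real.exp (-V s σ))) (t, x)

section

variable {μ : Measure X} {Ω : Set X} {N : X → ℝ} {A : ℝ → X → X → ℝ} {H V : ℝ → X → ℝ}

theorem renewalOp_of_mem {t : ℝ} (ht : 0 ≤ t) {x : X} (hx : x ∈ Ω) :
    renewalOp μ Ω N A H V t x =
      H t x + kernelConv μ Ω N A (fun s σ => 1 - Real.exp (-V s σ)) t x :=
  indicator_of_mem (mk_mem_prod ht hx) _

theorem renewalOp_of_neg {t : ℝ} (ht : t < 0) (x : X) : renewalOp μ Ω N A H V t x = 0 :=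
  indicator_of_notMem (fun h => (not_le.2 ht) h.1) _

theorem eq_of_isFixedPt_renewalOp (hV : IsFixedPt (renewalOp μ Ω N A H) V) {t : ℝ} (ht : 0 ≤ t)
    {x : X} (hx : x ∈ Ω) :
    V t x = H t x + kernelConv μ Ω N A (fun s σ => 1 - Real.exp (-V s σ)) t x := by
  rw [← renewalOp_of_mem ht hx, hV]

theorem eq_zero_of_isFixedPt_renewalOp (hV : IsFixedPt (renewalOp μ Ω N A H) V) {t : ℝ}
    (ht : t < 0) (x : X) : V t x = 0 := by
  rw [← hV, renewalOp_of_neg ht]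

theorem abs_sub_le_of_isFixedPt_renewalOp (hV : IsFixedPt (renewalOp μ Ω N A H) V) {s t : ℝ}
    (hs : 0 ≤ s) (ht : 0 ≤ t) {x : X} (hx : x ∈ Ω) :
    |V s x - V t x| ≤ |H s x - H t x| +
      |kernelConv μ Ω N A (fun r σ => 1 - Real.exp (-V r σ)) s x -
        kernelConv μ Ω N A (fun r σ => 1 - Real.exp (-V r σ)) t x| := by
  rw [eq_of_isFixedPt_renewalOp hV hs hx, eq_of_isFixedPt_renewalOp hV ht hx, add_sub_add_comm]
  exact abs_add_le _ _

end

namespace IsDominatedKernel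

variable {μ : Measure X} {Ω : Set X} {N : X → ℝ} {A : ℝ → X → X → ℝ} {a c : X → ℝ} {b : ℝ → ℝ}
  {ψ ψ' H V V' : ℝ → X → ℝ}

theorem of_le_on_Ici {α : ℝ} (hΩ : MeasurableSet Ω) (hN : Measurable N)
    (hN0 : ∀ x, 0 ≤ N x) (hA : Measurable fun p : ℝ × X × X => A p.1 p.2.1 p.2.2)
    (hA0 : ∀ τ x σ, 0 ≤ A τ x σ) (hA_neg : ∀ τ < 0, ∀ x σ, A τ x σ = 0) (hα : 0 ≤ α)
    (ha : ∀ x, 0 ≤ a x) (hb : ∀ τ, 0 ≤ b τ) (hc : ∀ σ, 0 ≤ c σ)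
    (haN : IntegrableOn (fun x => a x * N x) Ω μ) (hb_int : IntegrableOn b (Ici 0))
    (hcN : IntegrableOn (fun σ => c σ * N σ) Ω μ)
    (hA_le : ∀ τ ∈ Ici (0 : ℝ), ∀ x ∈ Ω, ∀ σ ∈ Ω, A τ x σ ≤ α * (a x * b τ * c σ)) :
    IsDominatedKernel μ Ω N A (fun x => α * a x) ((Ici 0).indicator b) c where
  measurableSet := hΩ
  measurable_N := hN
  N_nonneg := hN0
  measurable_A := hA
  A_nonneg := hA0
  A_of_neg := hA_neg
  A_le τ x hx σ hσ := by
    rcases lt_or_ge τ 0 with hτ | hτ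
    · simp [hA_neg τ hτ, indicator_of_notMem (notMem_Ici.2 hτ)]
    · rw [indicator_of_mem (mem_Ici.2 hτ)]
      linarith [hA_le τ hτ x hx σ hσ]
  a_nonneg x := mul_nonneg hα (ha x)
  b_nonneg := indicator_nonneg fun τ _ => hb τ
  c_nonneg := hc
  integrable_b := (integrable_indicator_iff measurableSet_Ici).2 hb_int
  integrableOn_aN := (haN.const_mul α).congr (Eventually.of_forall fun _ => (mul_assoc _ _ _).symm)
  integrableOn_cN := hcN

theorem integrableOn_mul_N_of_le (hK : IsDominatedKernel μ Ω N A a b c) {f g : X → ℝ}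
    (hg : IntegrableOn (fun x => g x * N x) Ω μ) (hf : Measurable f) (hf0 : ∀ x ∈ Ω, 0 ≤ f x)
    {C : ℝ} (hfC : ∀ x ∈ Ω, f x ≤ C * g x) : IntegrableOn (fun x => f x * N x) Ω μ := by
  refine (hg.const_mul C).mono' (hf.mul hK.measurable_N).aestronglyMeasurable
    (ae_restrict_of_forall_mem hK.measurableSet fun x hx => ?_)
  rw [Real.norm_eq_abs, abs_of_nonneg (mul_nonneg (hf0 x hx) (hK.N_nonneg x)), ← mul_assoc]
  exact mul_le_mul_of_nonneg_right (hfC x hx) (hK.N_nonneg x)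

theorem integrable_A (hK : IsDominatedKernel μ Ω N A a b c) {x σ : X} (hx : x ∈ Ω)
    (hσ : σ ∈ Ω) : Integrable (A · x σ) := by
  refine ((hK.integrable_b.const_mul (a x)).mul_const (c σ)).mono'
    (by have := hK.measurable_A; fun_prop) (Eventually.of_forall fun τ => ?_)
  rw [Real.norm_eq_abs, abs_of_nonneg (hK.A_nonneg τ x σ)]
  exact hK.A_le τ x hx σ hσ

theorem setIntegral_A_le (hK : IsDominatedKernel μ Ω N A a b c) {x σ : X} (hx : x ∈ Ω)
    (hσ : σ ∈ Ω) (s : Set ℝ) : ∫ τ in s, A τ x σ ≤ a x * c σ * ∫ τ in s, b τ := by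
  rw [← integral_const_mul]
  refine integral_mono (hK.integrable_A hx hσ).integrableOn
    (hK.integrable_b.integrableOn.const_mul _) fun τ => ?_
  linarith [hK.A_le τ x hx σ hσ]

theorem shiftDefect_le (hK : IsDominatedKernel μ Ω N A a b c) {x σ : X}
    (hx : x ∈ Ω) (hσ : σ ∈ Ω) (h : ℝ) : shiftDefect A h x σ ≤ 2 * (a x * c σ * ∫ τ, b τ) := by
  have hA := hK.integrable_A hx hσ
  have hAh : Integrable fun τ => A (τ + h) x σ := hA.comp_add_right h
  calc shiftDefect A h x σ ≤ ∫ τ, |A (τ + h) x σ - A τ x σ| :=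
        setIntegral_le_integral (hAh.sub hA).abs (Eventually.of_forall fun _ => abs_nonneg _)
    _ ≤ ∫ τ, (A (τ + h) x σ + A τ x σ) :=
        integral_mono (hAh.sub hA).abs (hAh.add hA) fun τ => abs_sub_le_iff.2
          ⟨by linarith [hK.A_nonneg τ x σ], by linarith [hK.A_nonneg (τ + h) x σ]⟩
    _ = 2 * ∫ τ, A τ x σ := by
        rw [integral_add hAh hA, integral_add_right_eq_self (A · x σ) h]; ring
    _ ≤ 2 * (a x * c σ * ∫ τ, b τ) := by
        have := hK.setIntegral_A_le hx hσ univ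
        simp only [Measure.restrict_univ] at this
        linarith

theorem measurable_shiftDefect (hK : IsDominatedKernel μ Ω N A a b c) (h : ℝ) :
    Measurable (uncurry (shiftDefect A h)) := by
  have := hK.measurable_A
  exact (StronglyMeasurable.integral_prod_right'
    (f := fun q : (X × X) × ℝ => |A (q.2 + h) q.1.1 q.1.2 - A q.2 q.1.1 q.1.2|)
    (by fun_prop : Measurable _).stronglyMeasurable).measurable

theorem integrableOn_shiftDefect_mul_N (hK : IsDominatedKernel μ Ω N A a b c) {x : X}
    (hx : x ∈ Ω) (h : ℝ) : IntegrableOn (fun σ => shiftDefect A h x σ * N σ) Ω μ :=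
  hK.integrableOn_mul_N_of_le hK.integrableOn_cN
    ((hK.measurable_shiftDefect h).comp (measurable_const.prodMk measurable_id))
    (fun σ _ => shiftDefect_nonneg A h x σ) (C := 2 * (a x * ∫ τ, b τ)) fun σ hσ => by
      linarith [hK.shiftDefect_le hx hσ h]

theorem integrableOn_integral_shiftDefect_mul_N_mul_N [SFinite μ]
    (hK : IsDominatedKernel μ Ω N A a b c) (h : ℝ) :
    IntegrableOn (fun x => (∫ σ in Ω, shiftDefect A h x σ * N σ ∂μ) * N x) Ω μ := by
  have := hK.measurable_shiftDefect h
  have := hK.measurable_N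
  refine hK.integrableOn_mul_N_of_le hK.integrableOn_aN
    (StronglyMeasurable.integral_prod_right' (ν := μ.restrict Ω)
      (f := fun p : X × X => shiftDefect A h p.1 p.2 * N p.2)
      (by fun_prop : Measurable _).stronglyMeasurable).measurable
    (fun x _ => setIntegral_nonneg hK.measurableSet fun σ _ =>
      mul_nonneg (shiftDefect_nonneg A h x σ) (hK.N_nonneg σ))
    (C := 2 * (∫ τ, b τ) * ∫ σ in Ω, c σ * N σ ∂μ) fun x hx => ?_
  calc ∫ σ in Ω, shiftDefect A h x σ * N σ ∂μ
      ≤ ∫ σ in Ω, 2 * (a x * ∫ τ, b τ) * (c σ * N σ) ∂μ :=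
        setIntegral_mono_on (hK.integrableOn_shiftDefect_mul_N hx h)
          (hK.integrableOn_cN.const_mul _) hK.measurableSet fun σ hσ => by
          calc _ ≤ 2 * (a x * c σ * ∫ τ, b τ) * N σ :=
                mul_le_mul_of_nonneg_right (hK.shiftDefect_le hx hσ h) (hK.N_nonneg σ)
            _ = _ := by ring
    _ = _ := by rw [integral_const_mul]; ring

theorem kernel_integrand_nonneg (hK : IsDominatedKernel μ Ω N A a b c) (hψ0 : 0 ≤ ψ)
    (τ s : ℝ) (x σ : X) : 0 ≤ A τ x σ * N σ * ψ s σ :=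
  mul_nonneg (mul_nonneg (hK.A_nonneg τ x σ) (hK.N_nonneg σ)) (hψ0 s σ)

theorem kernel_integrand_le (hK : IsDominatedKernel μ Ω N A a b c) (hψ1 : ψ ≤ 1)
    (τ s : ℝ) (x σ : X) : A τ x σ * N σ * ψ s σ ≤ A τ x σ * N σ :=
  mul_le_of_le_one_right (mul_nonneg (hK.A_nonneg τ x σ) (hK.N_nonneg σ)) (hψ1 s σ)

theorem integrable_kernel_integrand (hK : IsDominatedKernel μ Ω N A a b c)
    (hψ : Measurable (uncurry ψ)) (hψ0 : 0 ≤ ψ) (hψ1 : ψ ≤ 1) {x σ : X} (hx : x ∈ Ω)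
    (hσ : σ ∈ Ω) (t : ℝ) : Integrable fun τ => A τ x σ * N σ * ψ (t - τ) σ := by
  have := hK.measurable_A
  refine ((hK.integrable_A hx hσ).mul_const (N σ)).mono' (by fun_prop)
    (Eventually.of_forall fun τ => ?_)
  rw [Real.norm_eq_abs, abs_of_nonneg (hK.kernel_integrand_nonneg hψ0 ..)]
  exact hK.kernel_integrand_le hψ1 ..

theorem integral_kernel_integrand_le (hK : IsDominatedKernel μ Ω N A a b c)
    (hψ : Measurable (uncurry ψ)) (hψ0 : 0 ≤ ψ) (hψ1 : ψ ≤ 1) {x σ : X} (hx : x ∈ Ω)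
    (hσ : σ ∈ Ω) (t : ℝ) :
    ∫ τ, A τ x σ * N σ * ψ (t - τ) σ ≤ a x * (c σ * N σ) * ∫ τ, b τ := by
  rw [← integral_const_mul]
  refine integral_mono (hK.integrable_kernel_integrand hψ hψ0 hψ1 hx hσ t)
    (hK.integrable_b.const_mul _) fun τ => ?_
  calc A τ x σ * N σ * ψ (t - τ) σ ≤ A τ x σ * N σ := hK.kernel_integrand_le hψ1 ..
    _ ≤ a x * b τ * c σ * N σ := mul_le_mul_of_nonneg_right (hK.A_le τ x hx σ hσ) (hK.N_nonneg σ)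
    _ = a x * (c σ * N σ) * b τ := by ring

theorem measurable_integral_kernel_integrand (hK : IsDominatedKernel μ Ω N A a b c)
    (hψ : Measurable (uncurry ψ)) :
    Measurable fun p : (ℝ × X) × X => ∫ τ, A τ p.1.2 p.2 * N p.2 * ψ (p.1.1 - τ) p.2 := by
  have := hK.measurable_A
  have := hK.measurable_N
  exact (StronglyMeasurable.integral_prod_right'
    (f := fun q : ((ℝ × X) × X) × ℝ => A q.2 q.1.1.2 q.1.2 * N q.1.2 * ψ (q.1.1.1 - q.2) q.1.2)
    (by fun_prop : Measurable _).stronglyMeasurable).measurable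

theorem measurable_kernelConv [SFinite μ] (hK : IsDominatedKernel μ Ω N A a b c)
    (hψ : Measurable (uncurry ψ)) : Measurable (uncurry (kernelConv μ Ω N A ψ)) :=
  (StronglyMeasurable.integral_prod_right' (ν := μ.restrict Ω)
    (hK.measurable_integral_kernel_integrand hψ).stronglyMeasurable).measurable

theorem integrableOn_integral_kernel_integrand (hK : IsDominatedKernel μ Ω N A a b c)
    (hψ : Measurable (uncurry ψ)) (hψ0 : 0 ≤ ψ) (hψ1 : ψ ≤ 1) {x : X} (hx : x ∈ Ω) (t : ℝ) :
    IntegrableOn (fun σ => ∫ τ, A τ x σ * N σ * ψ (t - τ) σ) Ω μ := by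
  refine (hK.integrableOn_cN.const_mul (a x)).mul_const (∫ τ, b τ) |>.mono'
    ((hK.measurable_integral_kernel_integrand hψ).comp
      (by fun_prop : Measurable fun σ : X => ((t, x), σ))).aestronglyMeasurable
    (ae_restrict_of_forall_mem hK.measurableSet fun σ hσ => ?_)
  rw [Real.norm_eq_abs, abs_of_nonneg
    (integral_nonneg fun τ => hK.kernel_integrand_nonneg hψ0 ..)]
  exact hK.integral_kernel_integrand_le hψ hψ0 hψ1 hx hσ t

theorem kernelConv_nonneg (hK : IsDominatedKernel μ Ω N A a b c) (hψ0 : 0 ≤ ψ) (t : ℝ)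
    (x : X) : 0 ≤ kernelConv μ Ω N A ψ t x :=
  integral_nonneg fun _ => integral_nonneg fun _ => hK.kernel_integrand_nonneg hψ0 ..

theorem kernelConv_le (hK : IsDominatedKernel μ Ω N A a b c)
    (hψ : Measurable (uncurry ψ)) (hψ0 : 0 ≤ ψ) (hψ1 : ψ ≤ 1) {x : X} (hx : x ∈ Ω) (t : ℝ) :
    kernelConv μ Ω N A ψ t x ≤ a x * (∫ σ in Ω, c σ * N σ ∂μ) * ∫ τ, b τ := by
  calc kernelConv μ Ω N A ψ t x ≤ ∫ σ in Ω, a x * (c σ * N σ) * (∫ τ, b τ) ∂μ :=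
        setIntegral_mono_on (hK.integrableOn_integral_kernel_integrand hψ hψ0 hψ1 hx t)
          ((hK.integrableOn_cN.const_mul _).mul_const _) hK.measurableSet
          fun σ hσ => hK.integral_kernel_integrand_le hψ hψ0 hψ1 hx hσ t
    _ = _ := by rw [integral_mul_const, integral_const_mul]

theorem kernelConv_mono (hK : IsDominatedKernel μ Ω N A a b c)
    (hψ : Measurable (uncurry ψ)) (hψ0 : 0 ≤ ψ) (hψ1 : ψ ≤ 1)
    (hψ' : Measurable (uncurry ψ')) (hψ'0 : 0 ≤ ψ') (hψ'1 : ψ' ≤ 1) (hψψ' : ψ ≤ ψ')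
    {x : X} (hx : x ∈ Ω) (t : ℝ) : kernelConv μ Ω N A ψ t x ≤ kernelConv μ Ω N A ψ' t x :=
  setIntegral_mono_on (hK.integrableOn_integral_kernel_integrand hψ hψ0 hψ1 hx t)
    (hK.integrableOn_integral_kernel_integrand hψ' hψ'0 hψ'1 hx t) hK.measurableSet fun σ hσ =>
    integral_mono (hK.integrable_kernel_integrand hψ hψ0 hψ1 hx hσ t)
      (hK.integrable_kernel_integrand hψ' hψ'0 hψ'1 hx hσ t) fun τ =>
      mul_le_mul_of_nonneg_left (hψψ' _ σ) (mul_nonneg (hK.A_nonneg τ x σ) (hK.N_nonneg σ))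

theorem tendsto_kernelConv (hK : IsDominatedKernel μ Ω N A a b c) {Ψ : ℕ → ℝ → X → ℝ}
    (hΨ : ∀ k, Measurable (uncurry (Ψ k))) (hΨ0 : ∀ k, 0 ≤ Ψ k) (hΨ1 : ∀ k, Ψ k ≤ 1)
    (hlim : ∀ s σ, Tendsto (fun k => Ψ k s σ) atTop (𝓝 (ψ s σ))) {x : X} (hx : x ∈ Ω)
    (t : ℝ) : Tendsto (fun k => kernelConv μ Ω N A (Ψ k) t x) atTop
      (𝓝 (kernelConv μ Ω N A ψ t x)) := by
  have hinner (σ : X) (hσ : σ ∈ Ω) :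
      Tendsto (fun k => ∫ τ, A τ x σ * N σ * Ψ k (t - τ) σ) atTop
        (𝓝 (∫ τ, A τ x σ * N σ * ψ (t - τ) σ)) := by
    refine tendsto_integral_of_dominated_convergence (fun τ => A τ x σ * N σ)
      (fun k => (hK.integrable_kernel_integrand (hΨ k) (hΨ0 k) (hΨ1 k) hx hσ t).1)
      ((hK.integrable_A hx hσ).mul_const _) (fun k => Eventually.of_forall fun τ => ?_)
      (Eventually.of_forall fun τ => (hlim _ σ).const_mul _)
    rw [Real.norm_eq_abs, abs_of_nonneg (hK.kernel_integrand_nonneg (hΨ0 k) ..)]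
    exact hK.kernel_integrand_le (hΨ1 k) ..
  refine tendsto_integral_of_dominated_convergence
    (fun σ => a x * (c σ * N σ) * ∫ τ, b τ)
    (fun k => (hK.integrableOn_integral_kernel_integrand (hΨ k) (hΨ0 k) (hΨ1 k) hx t).1)
    ((hK.integrableOn_cN.const_mul _).mul_const _) (fun k => ?_)
    (ae_restrict_of_forall_mem hK.measurableSet hinner)
  refine ae_restrict_of_forall_mem hK.measurableSet fun σ hσ => ?_
  rw [Real.norm_eq_abs, abs_of_nonneg
    (integral_nonneg fun τ => hK.kernel_integrand_nonneg (hΨ0 k) ..)]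
  exact hK.integral_kernel_integrand_le (hΨ k) (hΨ0 k) (hΨ1 k) hx hσ t

theorem kernelConv_eq_setIntegral_Icc (hK : IsDominatedKernel μ Ω N A a b c)
    (hψ_neg : ∀ s < 0, ∀ σ, ψ s σ = 0) (t : ℝ) (x : X) :
    kernelConv μ Ω N A ψ t x = ∫ σ in Ω, (∫ τ in Icc 0 t, A τ x σ * N σ * ψ (t - τ) σ) ∂μ := by
  refine integral_congr_ae (Eventually.of_forall fun σ => ?_)
  refine (setIntegral_eq_integral_of_forall_compl_eq_zero fun τ hτ => ?_).symm
  rcases lt_or_ge τ 0 with hτ0 | hτ0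
  · rw [hK.A_of_neg τ hτ0, zero_mul, zero_mul]
  · rw [hψ_neg (t - τ) (by simpa [hτ0] using hτ) σ, mul_zero]

theorem abs_integral_kernel_integrand_sub_le (hK : IsDominatedKernel μ Ω N A a b c)
    (hψ : Measurable (uncurry ψ)) (hψ0 : 0 ≤ ψ) (hψ1 : ψ ≤ 1) {x σ : X} (hx : x ∈ Ω)
    (hσ : σ ∈ Ω) (s t : ℝ) :
    |(∫ τ, A τ x σ * N σ * ψ (s - τ) σ) - ∫ τ, A τ x σ * N σ * ψ (t - τ) σ| ≤
      shiftDefect A (s - t) x σ * N σ + a x * (c σ * N σ) * ∫ τ in Icc 0 |s - t|, b τ := by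
  have hA := hK.integrable_A hx hσ
  have hψ_le (τ : ℝ) : |ψ (t - τ) σ| ≤ 1 := (abs_of_nonneg (hψ0 _ σ)).trans_le (hψ1 _ σ)
  have hst (τ : ℝ) : s - (τ + (s - t)) = t - τ := by ring
  have hdiff : (∫ τ, A τ x σ * N σ * ψ (s - τ) σ) - ∫ τ, A τ x σ * N σ * ψ (t - τ) σ =
      ∫ τ, (A (τ + (s - t)) x σ - A τ x σ) * N σ * ψ (t - τ) σ := by
    rw [← integral_add_right_eq_self _ (s - t), ← integral_sub
      ((hK.integrable_kernel_integrand hψ hψ0 hψ1 hx hσ s).comp_add_right (s - t))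
      (hK.integrable_kernel_integrand hψ hψ0 hψ1 hx hσ t)]
    simp only [hst, sub_mul]
  have hΔA : Integrable fun τ => |A (τ + (s - t)) x σ - A τ x σ| :=
    ((hA.comp_add_right (s - t)).sub hA).abs
  calc |(∫ τ, A τ x σ * N σ * ψ (s - τ) σ) - ∫ τ, A τ x σ * N σ * ψ (t - τ) σ|
      = |∫ τ, (A (τ + (s - t)) x σ - A τ x σ) * N σ * ψ (t - τ) σ| := by rw [hdiff]
    _ ≤ ∫ τ, |(A (τ + (s - t)) x σ - A τ x σ) * N σ * ψ (t - τ) σ| :=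
        abs_integral_le_integral_abs
    _ ≤ ∫ τ, |A (τ + (s - t)) x σ - A τ x σ| * N σ :=
        integral_mono_of_nonneg (Eventually.of_forall fun _ => abs_nonneg _)
          (hΔA.mul_const _) (Eventually.of_forall fun τ => by
          dsimp only
          rw [abs_mul, abs_mul, abs_of_nonneg (hK.N_nonneg σ)]
          exact mul_le_of_le_one_right (mul_nonneg (abs_nonneg _) (hK.N_nonneg σ)) (hψ_le τ))
    _ = (∫ τ, |A (τ + (s - t)) x σ - A τ x σ|) * N σ := integral_mul_const _ _
    _ ≤ (shiftDefect A (s - t) x σ + ∫ τ in Icc 0 |s - t|, A τ x σ) * N σ :=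
        mul_le_mul_of_nonneg_right (integral_abs_comp_add_sub_le hA
          (fun τ => hK.A_nonneg τ x σ) (fun τ hτ => hK.A_of_neg τ hτ x σ) _) (hK.N_nonneg σ)
    _ ≤ _ := by
        rw [add_mul]
        have := mul_le_mul_of_nonneg_right (hK.setIntegral_A_le hx hσ (Icc 0 |s - t|))
          (hK.N_nonneg σ)
        linarith

theorem abs_kernelConv_sub_le (hK : IsDominatedKernel μ Ω N A a b c)
    (hψ : Measurable (uncurry ψ)) (hψ0 : 0 ≤ ψ) (hψ1 : ψ ≤ 1) {x : X} (hx : x ∈ Ω) (s t : ℝ) :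
    |kernelConv μ Ω N A ψ s x - kernelConv μ Ω N A ψ t x| ≤
      (∫ σ in Ω, shiftDefect A (s - t) x σ * N σ ∂μ) +
        a x * (∫ σ in Ω, c σ * N σ ∂μ) * ∫ τ in Icc 0 |s - t|, b τ := by
  have hD := hK.integrableOn_shiftDefect_mul_N hx (s - t)
  have hβ := (hK.integrableOn_cN.const_mul (a x)).mul_const (∫ τ in Icc 0 |s - t|, b τ)
  rw [kernelConv, kernelConv,
    ← integral_sub (hK.integrableOn_integral_kernel_integrand hψ hψ0 hψ1 hx s)
      (hK.integrableOn_integral_kernel_integrand hψ hψ0 hψ1 hx t)]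
  calc _ ≤ ∫ σ in Ω, |(∫ τ, A τ x σ * N σ * ψ (s - τ) σ) -
          ∫ τ, A τ x σ * N σ * ψ (t - τ) σ| ∂μ := abs_integral_le_integral_abs
    _ ≤ ∫ σ in Ω, (shiftDefect A (s - t) x σ * N σ +
          a x * (c σ * N σ) * ∫ τ in Icc 0 |s - t|, b τ) ∂μ :=
        integral_mono_of_nonneg (Eventually.of_forall fun _ => abs_nonneg _) (hD.add hβ)
          (ae_restrict_of_forall_mem hK.measurableSet fun σ hσ =>
            hK.abs_integral_kernel_integrand_sub_le hψ hψ0 hψ1 hx hσ s t)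
    _ = _ := by rw [integral_add hD hβ, integral_mul_const, integral_const_mul]

theorem integrableOn_abs_kernelConv_sub [SFinite μ] (hK : IsDominatedKernel μ Ω N A a b c)
    (hψ : Measurable (uncurry ψ)) (hψ0 : 0 ≤ ψ) (hψ1 : ψ ≤ 1) (s t : ℝ) :
    IntegrableOn (fun x => |kernelConv μ Ω N A ψ s x - kernelConv μ Ω N A ψ t x| * N x) Ω μ := by
  have hKm := hK.measurable_kernelConv hψ
  have hslice (r : ℝ) : Measurable fun x => kernelConv μ Ω N A ψ r x :=
    hKm.comp (measurable_const.prodMk measurable_id)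
  refine hK.integrableOn_mul_N_of_le hK.integrableOn_aN ((hslice s).sub (hslice t)).abs
    (fun _ _ => abs_nonneg _) (C := (∫ σ in Ω, c σ * N σ ∂μ) * ∫ τ, b τ) fun x hx => ?_
  have hs := hK.kernelConv_le hψ hψ0 hψ1 hx s
  have ht := hK.kernelConv_le hψ hψ0 hψ1 hx t
  have hs0 := hK.kernelConv_nonneg hψ0 s x
  have ht0 := hK.kernelConv_nonneg hψ0 t x
  rw [abs_sub_le_iff]
  constructor <;> linarith

theorem integral_abs_kernelConv_sub_le [SFinite μ] (hK : IsDominatedKernel μ Ω N A a b c)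
    (hψ : Measurable (uncurry ψ)) (hψ0 : 0 ≤ ψ) (hψ1 : ψ ≤ 1) (s t : ℝ) :
    ∫ x in Ω, |kernelConv μ Ω N A ψ s x - kernelConv μ Ω N A ψ t x| * N x ∂μ ≤
      (∫ x in Ω, ∫ σ in Ω, (∫ τ in Ici 0, N x * |A (τ + (s - t)) x σ - A τ x σ| * N σ) ∂μ ∂μ) +
        (∫ x in Ω, a x * N x ∂μ) * (∫ σ in Ω, c σ * N σ ∂μ) * ∫ τ in Icc 0 |s - t|, b τ := by
  set Cc := ∫ σ in Ω, c σ * N σ ∂μ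
  set β := ∫ τ in Icc 0 |s - t|, b τ
  set D : X → ℝ := fun x => ∫ σ in Ω, shiftDefect A (s - t) x σ * N σ ∂μ
  have hD_eq (x : X) :
      ∫ σ in Ω, (∫ τ in Ici 0, N x * |A (τ + (s - t)) x σ - A τ x σ| * N σ) ∂μ = D x * N x := by
    rw [← integral_mul_const]
    refine integral_congr_ae (Eventually.of_forall fun σ => ?_)
    simp only [shiftDefect, integral_mul_const, integral_const_mul]
    ring
  have hD_int := hK.integrableOn_integral_shiftDefect_mul_N_mul_N (s - t)
  have hΔK_int := hK.integrableOn_abs_kernelConv_sub hψ hψ0 hψ1 s t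
  calc ∫ x in Ω, |kernelConv μ Ω N A ψ s x - kernelConv μ Ω N A ψ t x| * N x ∂μ
      ≤ ∫ x in Ω, (D x * N x + a x * N x * (Cc * β)) ∂μ :=
        setIntegral_mono_on hΔK_int (hD_int.add (hK.integrableOn_aN.mul_const _))
          hK.measurableSet fun x hx => by
          calc _ ≤ (D x + a x * Cc * β) * N x := mul_le_mul_of_nonneg_right
                (hK.abs_kernelConv_sub_le hψ hψ0 hψ1 hx s t) (hK.N_nonneg x)
            _ = _ := by ring
    _ = _ := by
        rw [integral_add hD_int (hK.integrableOn_aN.mul_const _), integral_mul_const,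
          integral_congr_ae (Eventually.of_forall hD_eq)]
        ring

theorem tendsto_integral_abs_kernelConv_sub [SFinite μ] (hK : IsDominatedKernel μ Ω N A a b c)
    (hψ : Measurable (uncurry ψ)) (hψ0 : 0 ≤ ψ) (hψ1 : ψ ≤ 1)
    (hshift : Tendsto (fun h => ∫ x in Ω, ∫ σ in Ω,
      (∫ τ in Ici 0, N x * |A (τ + h) x σ - A τ x σ| * N σ) ∂μ ∂μ) (𝓝 0) (𝓝 0)) (t : ℝ) :
    Tendsto (fun s => ∫ x in Ω, |kernelConv μ Ω N A ψ s x - kernelConv μ Ω N A ψ t x| * N x ∂μ)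
      (𝓝 t) (𝓝 0) := by
  have hst : Tendsto (fun s => s - t) (𝓝 t) (𝓝 0) := tendsto_sub_nhds_zero_iff.2 tendsto_id
  have hbound := (hshift.comp hst).add
    ((hK.integrable_b.tendsto_setIntegral_Icc_zero_abs.comp hst).const_mul
      ((∫ x in Ω, a x * N x ∂μ) * ∫ σ in Ω, c σ * N σ ∂μ))
  rw [zero_add, mul_zero] at hbound
  exact squeeze_zero
    (fun s => integral_nonneg fun x => mul_nonneg (abs_nonneg _) (hK.N_nonneg x))
    (fun s => hK.integral_abs_kernelConv_sub_le hψ hψ0 hψ1 s t) hbound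

theorem measurable_renewalOp [SFinite μ] (hK : IsDominatedKernel μ Ω N A a b c)
    (hH : Measurable (uncurry H)) (hV : Measurable (uncurry V)) :
    Measurable (uncurry (renewalOp μ Ω N A H V)) := by
  have hK' := hK.measurable_kernelConv (ψ := fun s σ => 1 - Real.exp (-V s σ)) (by fun_prop)
  exact (hH.add hK').indicator (measurableSet_Ici.prod hK.measurableSet)

theorem renewalOp_nonneg (hK : IsDominatedKernel μ Ω N A a b c)
    (hH0 : ∀ t, 0 ≤ t → ∀ x ∈ Ω, 0 ≤ H t x) (hV0 : 0 ≤ V) : 0 ≤ renewalOp μ Ω N A H V :=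
  fun t x => indicator_nonneg (fun p hp => add_nonneg (hH0 p.1 hp.1 p.2 hp.2)
    (hK.kernelConv_nonneg (fun s σ => one_sub_exp_neg_nonneg (hV0 s σ)) p.1 p.2)) (t, x)

theorem renewalOp_le (hK : IsDominatedKernel μ Ω N A a b c) {M : ℝ} (hM : 0 ≤ M)
    (hHM : ∀ t, 0 ≤ t → ∀ x ∈ Ω, H t x ≤ M * a x) (hV : Measurable (uncurry V)) (hV0 : 0 ≤ V) :
    renewalOp μ Ω N A H V ≤
      fun _ x => (M + (∫ σ in Ω, c σ * N σ ∂μ) * ∫ τ, b τ) * a x := by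
  have hCc : 0 ≤ ∫ σ in Ω, c σ * N σ ∂μ :=
    integral_nonneg fun σ => mul_nonneg (hK.c_nonneg σ) (hK.N_nonneg σ)
  have hL : 0 ≤ ∫ τ, b τ := integral_nonneg hK.b_nonneg
  refine fun t x => indicator_apply_le' (fun hp => ?_)
    (fun _ => mul_nonneg (by positivity) (hK.a_nonneg x))
  have := hK.kernelConv_le (ψ := fun s σ => 1 - Real.exp (-V s σ)) (by fun_prop)
    (fun s σ => one_sub_exp_neg_nonneg (hV0 s σ)) (fun s σ => one_sub_exp_neg_le_one _) hp.2 t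
  have := hHM t hp.1 x hp.2
  simp only [Pi.add_apply, uncurry_apply_pair]
  linarith

theorem renewalOp_mono (hK : IsDominatedKernel μ Ω N A a b c) (hV : Measurable (uncurry V))
    (hV0 : 0 ≤ V) (hV' : Measurable (uncurry V')) (hV'0 : 0 ≤ V') (hVV' : V ≤ V') :
    renewalOp μ Ω N A H V ≤ renewalOp μ Ω N A H V' := by
  intro t x
  by_cases hp : 0 ≤ t ∧ x ∈ Ω
  · rw [renewalOp_of_mem hp.1 hp.2, renewalOp_of_mem hp.1 hp.2]
    exact add_le_add le_rfl (hK.kernelConv_mono (by fun_prop)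
      (fun s σ => one_sub_exp_neg_nonneg (hV0 s σ)) (fun s σ => one_sub_exp_neg_le_one _)
      (by fun_prop) (fun s σ => one_sub_exp_neg_nonneg (hV'0 s σ))
      (fun s σ => one_sub_exp_neg_le_one _)
      (fun s σ => monotone_one_sub_exp_neg (hVV' s σ)) hp.2 t)
  · simp only [renewalOp, indicator_of_notMem (show (t, x) ∉ Ici 0 ×ˢ Ω from hp), le_refl]

theorem tendsto_renewalOp (hK : IsDominatedKernel μ Ω N A a b c) {V : ℕ → ℝ → X → ℝ}
    {W : ℝ → X → ℝ} (hV : ∀ k, Measurable (uncurry (V k))) (hV0 : ∀ k, 0 ≤ V k)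
    (hVW : Tendsto V atTop (𝓝 W)) :
    Tendsto (fun k => renewalOp μ Ω N A H (V k)) atTop (𝓝 (renewalOp μ Ω N A H W)) := by
  refine tendsto_pi_nhds.2 fun t => tendsto_pi_nhds.2 fun x => ?_
  by_cases hp : 0 ≤ t ∧ x ∈ Ω
  · simp only [renewalOp_of_mem hp.1 hp.2]
    refine (hK.tendsto_kernelConv (fun k => by fun_prop)
      (fun k s σ => one_sub_exp_neg_nonneg (hV0 k s σ)) (fun k s σ => one_sub_exp_neg_le_one _)
      (fun s σ => ?_) hp.2 t).const_add _
    have := tendsto_pi_nhds.1 (tendsto_pi_nhds.1 hVW s) σ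
    exact ((Real.continuous_exp.comp continuous_neg).tendsto _).comp this |>.const_sub 1
  · simp only [renewalOp, indicator_of_notMem (show (t, x) ∉ Ici 0 ×ˢ Ω from hp),
      tendsto_const_nhds]

theorem exists_isFixedPt_renewalOp [SFinite μ] (hK : IsDominatedKernel μ Ω N A a b c)
    (hH : Measurable (uncurry H)) (hH0 : ∀ t, 0 ≤ t → ∀ x ∈ Ω, 0 ≤ H t x) {M : ℝ} (hM : 0 ≤ M)
    (hHM : ∀ t, 0 ≤ t → ∀ x ∈ Ω, H t x ≤ M * a x) :
    ∃ W : ℝ → X → ℝ, Measurable (uncurry W) ∧ 0 ≤ W ∧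
      (∀ t, IntegrableOn (fun x => W t x * N x) Ω μ) ∧ IsFixedPt (renewalOp μ Ω N A H) W := by
  set C := M + (∫ σ in Ω, c σ * N σ ∂μ) * ∫ τ, b τ
  have hC : 0 ≤ C := add_nonneg hM (mul_nonneg
    (integral_nonneg fun σ => mul_nonneg (hK.c_nonneg σ) (hK.N_nonneg σ))
    (integral_nonneg hK.b_nonneg))
  obtain ⟨W, ⟨hW, hW0, hWC⟩, hfix⟩ := exists_isFixedPt_of_monotone_iterate
    (renewalOp μ Ω N A H) (fun V => Measurable (uncurry V) ∧ 0 ≤ V ∧ V ≤ fun _ x => C * a x)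
    0 (fun _ x => C * a x) ⟨measurable_const, le_rfl, fun _ x => mul_nonneg hC (hK.a_nonneg x)⟩
    (hK.renewalOp_nonneg hH0 le_rfl)
    (fun V hV => ⟨hK.measurable_renewalOp hH hV.1, hK.renewalOp_nonneg hH0 hV.2.1,
      hK.renewalOp_le hM hHM hV.1 hV.2.1⟩)
    (fun V hV => hV.2.2) (fun V V' hV hV' => hK.renewalOp_mono hV.1 hV.2.1 hV'.1 hV'.2.1)
    fun V W hV _ hVW => ⟨⟨measurable_of_tendsto_metrizable (fun k => (hV k).1)
      (tendsto_pi_nhds.2 fun p => tendsto_pi_nhds.1 (tendsto_pi_nhds.1 hVW p.1) p.2),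
      isClosed_Icc.mem_of_tendsto hVW (Eventually.of_forall fun k => (hV k).2)⟩,
      hK.tendsto_renewalOp (fun k => (hV k).1) (fun k => (hV k).2.1) hVW⟩
  exact ⟨W, hW, hW0, fun t => hK.integrableOn_mul_N_of_le hK.integrableOn_aN
    (hW.comp (measurable_const.prodMk measurable_id)) (fun x _ => hW0 t x)
    fun x _ => hWC t x, hfix⟩

theorem tendsto_integral_abs_sub_of_isFixedPt [SFinite μ] (hK : IsDominatedKernel μ Ω N A a b c)
    (hH : Measurable (uncurry H)) (hH0 : ∀ t, 0 ≤ t → ∀ x ∈ Ω, 0 ≤ H t x) {M : ℝ}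
    (hHM : ∀ t, 0 ≤ t → ∀ x ∈ Ω, H t x ≤ M * a x)
    (hshift : Tendsto (fun h => ∫ x in Ω, ∫ σ in Ω,
      (∫ τ in Ici 0, N x * |A (τ + h) x σ - A τ x σ| * N σ) ∂μ ∂μ) (𝓝 0) (𝓝 0))
    {W : ℝ → X → ℝ} (hW : Measurable (uncurry W)) (hW0 : 0 ≤ W)
    (hfix : IsFixedPt (renewalOp μ Ω N A H) W) {t : ℝ} (ht : 0 ≤ t)
    (hHt : Tendsto (fun s => ∫ x in Ω, |H s x - H t x| * N x ∂μ) (𝓝[Ici 0] t) (𝓝 0)) :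
    Tendsto (fun s => ∫ x in Ω, |W s x - W t x| * N x ∂μ) (𝓝[Ici 0] t) (𝓝 0) := by
  set ψ : ℝ → X → ℝ := fun s σ => 1 - Real.exp (-W s σ)
  have hψ : Measurable (uncurry ψ) := by fun_prop
  have hψ0 : 0 ≤ ψ := fun s σ => one_sub_exp_neg_nonneg (hW0 s σ)
  have hψ1 : ψ ≤ 1 := fun s σ => one_sub_exp_neg_le_one _
  have hKt := (hK.tendsto_integral_abs_kernelConv_sub hψ hψ0 hψ1 hshift t).mono_left
    (nhdsWithin_le_nhds (s := Ici 0))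
  refine squeeze_zero' (Eventually.of_forall fun s =>
    integral_nonneg fun x => mul_nonneg (abs_nonneg _) (hK.N_nonneg x)) ?_
    (by simpa only [add_zero] using hHt.add hKt)
  filter_upwards [self_mem_nhdsWithin] with s (hs : 0 ≤ s)
  have hHs := hH.comp (measurable_const.prodMk measurable_id : Measurable fun x : X => (s, x))
  have hHt' := hH.comp (measurable_const.prodMk measurable_id : Measurable fun x : X => (t, x))
  have hΔH : IntegrableOn (fun x => |H s x - H t x| * N x) Ω μ :=
    hK.integrableOn_mul_N_of_le hK.integrableOn_aN (hHs.sub hHt').abs (fun _ _ => abs_nonneg _)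
      (C := M) fun x hx => abs_sub_le_iff.2
        ⟨by linarith [hHM s hs x hx, hH0 t ht x hx], by linarith [hHM t ht x hx, hH0 s hs x hx]⟩
  have hΔK := hK.integrableOn_abs_kernelConv_sub hψ hψ0 hψ1 s t
  rw [← integral_add hΔH hΔK]
  refine integral_mono_of_nonneg (Eventually.of_forall fun x =>
    mul_nonneg (abs_nonneg _) (hK.N_nonneg x)) (hΔH.add hΔK)
    (ae_restrict_of_forall_mem hK.measurableSet fun x hx => ?_)
  exact (mul_le_mul_of_nonneg_right (abs_sub_le_of_isFixedPt_renewalOp hfix hs ht hx)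
    (hK.N_nonneg x)).trans_eq (add_mul _ _ _)

theorem eq_add_setIntegral_Icc_of_isFixedPt (hK : IsDominatedKernel μ Ω N A a b c)
    (hV : IsFixedPt (renewalOp μ Ω N A H) V) {t : ℝ} (ht : 0 ≤ t) {x : X} (hx : x ∈ Ω) :
    V t x = H t x +
      ∫ σ in Ω, (∫ τ in Icc 0 t, A τ x σ * N σ * (1 - Real.exp (-V (t - τ) σ))) ∂μ := by
  rw [eq_of_isFixedPt_renewalOp hV ht hx, hK.kernelConv_eq_setIntegral_Icc fun s hs σ => by
    simp [eq_zero_of_isFixedPt_renewalOp hV hs σ]]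

end IsDominatedKernel

theorem FOp_exists_fixed_point_general
    {n : ℕ} (Ω : Set (Fin n → ℝ)) (hΩ : MeasurableSet Ω)
    (N : (Fin n → ℝ) → ℝ) (hNmeas : Measurable N) (hNnn : ∀ x, 0 ≤ N x)
    (A : ℝ → (Fin n → ℝ) → (Fin n → ℝ) → ℝ)
    (hAmeas : Measurable (fun p : ℝ × (Fin n → ℝ) × (Fin n → ℝ) => A p.1 p.2.1 p.2.2))
    (hAnn : ∀ τ x σ, 0 ≤ A τ x σ)
    (hAzero : ∀ τ < (0:ℝ), ∀ x σ, A τ x σ = 0)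
    -- Assumption 1(1)
    (α : ℝ) (hα : 1 < α)
    (a : (Fin n → ℝ) → ℝ) (b : ℝ → ℝ) (c : (Fin n → ℝ) → ℝ)
    (hann : ∀ x, 0 ≤ a x) (hbnn : ∀ τ, 0 ≤ b τ) (hcnn : ∀ σ, 0 ≤ c σ)
    (haN : IntegrableOn (fun x => a x * N x) Ω)
    (hbint : IntegrableOn b (Ici 0))
    (hcN : IntegrableOn (fun x => c x * N x) Ω)
    (hAbound : ∀ τ ∈ Ici (0:ℝ), ∀ x ∈ Ω, ∀ σ ∈ Ω,
      a x * b τ * c σ ≤ A τ x σ ∧ A τ x σ ≤ α * (a x * b τ * c σ))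
    (H : ℝ → (Fin n → ℝ) → ℝ) (Q : ℝ → ℝ)
    (hHmeas : Measurable (Function.uncurry H))
    (hQbdd : ∃ M, ∀ t ∈ Ici (0:ℝ), Q t ≤ M)
    (hQnn : ∀ t, 0 ≤ Q t)
    (hHbound : ∀ t ∈ Ici (0:ℝ), ∀ x ∈ Ω, a x * Q t ≤ H t x ∧ H t x ≤ α * (a x * Q t))
    -- Assumption 1(2)
    (hAshift_t : Tendsto (fun h : ℝ =>
        ∫ x in Ω, ∫ σ in Ω, ∫ τ in Ici (0:ℝ), N x * |A (τ + h) x σ - A τ x σ| * N σ)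
      (nhds 0) (nhds 0))
    (hHcont : ∀ t ∈ Ici (0:ℝ),
      Tendsto (fun s => ∫ x in Ω, |H s x - H t x| * N x) (nhdsWithin t (Ici 0)) (nhds 0))
    (T : ℝ) :
    ∃ W : ℝ → (Fin n → ℝ) → ℝ,
      Measurable (Function.uncurry W) ∧
      (∀ t ∈ Icc (0:ℝ) T, IntegrableOn (fun x => W t x * N x) Ω) ∧
      (∀ t ∈ Icc (0:ℝ) T, ∀ᵐ x ∂(volume.restrict Ω), 0 ≤ W t x) ∧
      (∀ t ∈ Icc (0:ℝ) T, Tendsto (fun s => ∫ x in Ω, |W s x - W t x| * N x)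
        (nhdsWithin t (Icc 0 T)) (nhds 0)) ∧
      (∀ t ∈ Icc (0:ℝ) T, ∀ᵐ x ∂(volume.restrict Ω),
        W t x = H t x +
          ∫ σ in Ω, ∫ τ in Icc (0:ℝ) t, A τ x σ * N σ * (1 - Real.exp (-(W (t - τ) σ)))) := by
  obtain ⟨M, hM⟩ := hQbdd
  have hK := IsDominatedKernel.of_le_on_Ici (μ := volume) hΩ hNmeas hNnn hAmeas hAnn hAzero
    (by linarith) hann hbnn hcnn haN hbint hcN fun τ hτ x hx σ hσ => (hAbound τ hτ x hx σ hσ).2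
  have hH0 (t : ℝ) (ht : 0 ≤ t) (x) (hx : x ∈ Ω) : 0 ≤ H t x :=
    (mul_nonneg (hann x) (hQnn t)).trans (hHbound t ht x hx).1
  have hHM (t : ℝ) (ht : 0 ≤ t) (x) (hx : x ∈ Ω) : H t x ≤ M * (α * a x) := by
    have := mul_le_mul_of_nonneg_left (hM t ht) (mul_nonneg (by linarith : 0 ≤ α) (hann x))
    linarith [(hHbound t ht x hx).2]
  obtain ⟨W, hW, hW0, hWint, hfix⟩ :=
    hK.exists_isFixedPt_renewalOp hHmeas hH0 ((hQnn 0).trans (hM 0 self_mem_Ici)) hHM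
  refine ⟨W, hW, fun t _ => hWint t, fun t _ => Eventually.of_forall (hW0 t),
    fun t ht => ?_, fun t ht => ae_restrict_of_forall_mem hΩ fun x hx =>
      hK.eq_add_setIntegral_Icc_of_isFixedPt hfix ht.1 hx⟩
  exact (hK.tendsto_integral_abs_sub_of_isFixedPt hHmeas hH0 hHM hAshift_t hW hW0 hfix ht.1
    (hHcont t ht.1)).mono_left (nhdsWithin_mono t Icc_subset_Ici_self)

/-- for every `T > 0`, the renewal operator `𝓕` has at least one fixed point
in `C_{T+}`: there is a nonnegative `W ∈ C([0,T];Y)` with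
`W(t,x) = H(t,x) + ∫_Ω ∫_0^t A(τ,x,σ) N(σ)(1 - e^{-W(t-τ,σ)}) dτ dσ`. -/
theorem FOp_exists_fixed_point
    {n : ℕ} (Ω : Set (Fin n → ℝ)) (hΩ : MeasurableSet Ω)
    (N : (Fin n → ℝ) → ℝ) (hNmeas : Measurable N) (hNnn : ∀ x, 0 ≤ N x)
    (hNint : IntegrableOn N Ω)
    (hNpos : ∀ᵐ x ∂(volume.restrict Ω), 0 < N x)
    (A : ℝ → (Fin n → ℝ) → (Fin n → ℝ) → ℝ)
    (hAmeas : Measurable (fun p : ℝ × (Fin n → ℝ) × (Fin n → ℝ) => A p.1 p.2.1 p.2.2))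
    (hAnn : ∀ τ x σ, 0 ≤ A τ x σ)
    (hAzero : ∀ τ < (0:ℝ), ∀ x σ, A τ x σ = 0)
    -- Assumption 1(1)
    (α : ℝ) (hα : 1 < α)
    (a : (Fin n → ℝ) → ℝ) (b : ℝ → ℝ) (c : (Fin n → ℝ) → ℝ)
    (hameas : Measurable a) (hbmeas : Measurable b) (hcmeas : Measurable c)
    (hann : ∀ x, 0 ≤ a x) (hbnn : ∀ τ, 0 ≤ b τ) (hcnn : ∀ σ, 0 ≤ c σ)
    (haN : IntegrableOn (fun x => a x * N x) Ω)
    (hbint : IntegrableOn b (Ici 0))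
    (hcN : IntegrableOn (fun x => c x * N x) Ω)
    (hc2N : IntegrableOn (fun x => c x ^ 2 * N x) Ω)
    (hAbound : ∀ τ ∈ Ici (0:ℝ), ∀ x ∈ Ω, ∀ σ ∈ Ω,
      a x * b τ * c σ ≤ A τ x σ ∧ A τ x σ ≤ α * (a x * b τ * c σ))
    (H : ℝ → (Fin n → ℝ) → ℝ) (Q : ℝ → ℝ)
    (hHmeas : Measurable (Function.uncurry H))
    (hQcont : ContinuousOn Q (Ici 0)) (hQbdd : ∃ M, ∀ t ∈ Ici (0:ℝ), Q t ≤ M)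
    (hQnn : ∀ t, 0 ≤ Q t)
    (hHbound : ∀ t ∈ Ici (0:ℝ), ∀ x ∈ Ω, a x * Q t ≤ H t x ∧ H t x ≤ α * (a x * Q t))
    -- Assumption 1(2)
    (hAshift_t : Tendsto (fun h : ℝ =>
        ∫ x in Ω, ∫ σ in Ω, ∫ τ in Ici (0:ℝ), N x * |A (τ + h) x σ - A τ x σ| * N σ)
      (nhds 0) (nhds 0))
    (hAshift_x : Tendsto (fun h : Fin n → ℝ =>
        ∫ x in Ω, ∫ σ in Ω, ∫ τ in Ici (0:ℝ),
          |indicator Ω (fun y => N y * A τ y σ) (x + h) - N x * A τ x σ| * N σ)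
      (nhds 0) (nhds 0))
    (hHcont : ∀ t ∈ Ici (0:ℝ),
      Tendsto (fun s => ∫ x in Ω, |H s x - H t x| * N x) (nhdsWithin t (Ici 0)) (nhds 0))
    (T : ℝ) (hT : 0 < T) :
    ∃ W : ℝ → (Fin n → ℝ) → ℝ,
      Measurable (Function.uncurry W) ∧
      (∀ t ∈ Icc (0:ℝ) T, IntegrableOn (fun x => W t x * N x) Ω) ∧
      (∀ t ∈ Icc (0:ℝ) T, ∀ᵐ x ∂(volume.restrict Ω), 0 ≤ W t x) ∧
      (∀ t ∈ Icc (0:ℝ) T, Tendsto (fun s => ∫ x in Ω, |W s x - W t x| * N x)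
        (nhdsWithin t (Icc 0 T)) (nhds 0)) ∧
      (∀ t ∈ Icc (0:ℝ) T, ∀ᵐ x ∂(volume.restrict Ω),
        W t x = H t x +
          ∫ σ in Ω, ∫ τ in Icc (0:ℝ) t, A τ x σ * N σ * (1 - Real.exp (-(W (t - τ) σ)))) :=
  FOp_exists_fixed_point_general Ω hΩ N hNmeas hNnn A hAmeas hAnn hAzero α hα a b c hann hbnn hcnn
    haN hbint hcN hAbound H Q hHmeas hQbdd hQnn hHbound hAshift_t hHcont T
end

section
/- Let W : [0,∞) → Y be a nonnegative continuous solution of W(t,x) = H(t,x) + ∫_Ω ∫_0^t A(τ,x,σ)N(σ)(1 − e^{−W(t−τ,σ)}) dτ dσ such that for a.e. x the map t ↦ W(t,x) is nondecreasing, and suppose t ↦ H(t,x) is nondecreasing with pointwise limit H(∞,x) as t → ∞. Then there exists W_∞ ∈ Y with W_∞ ≥ 0 such that ‖W(t,·) − W_∞‖_Y → 0 as t → ∞, and W_∞ satisfies the limit (final size) equation W_∞(x) = H(∞,x) + ∫_Ω Θ(x,σ)N(σ)(1 − e^{−W_∞(σ)}) dσ for a.e. x, where Θ(x,σ) = ∫_0^∞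 A(τ,x,σ) dτ. -/
/-!
Since `1 - e^{-W} ∈ [0, 1]` and `A ≤ α a b c`, the renewal term at `x` is at most
`α a(x) (∫ b) (∫ c N)`, so with `Q ≤ M` every `W(t, ·)` is bounded by `C a` for one constant `C`.
Being monotone in `t`, `W(t, x)` increases to `W_∞(x) = sup_m W(m, x) ≤ C a(x)`, and as `a N` is
integrable, dominated convergence gives `W(t) → W_∞` in `Y`. Along integer times, dominated
convergence in `τ` (majorant `α a(x) c(σ) N(σ) b(τ)`) and then in `σ` (majorant
`α a(x) (∫ b) c(σ) N(σ)`) passes to the limit in the renewal term, while `H(m, x) → H(∞, x)`.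
-/

open MeasureTheory Set Filter Topology

lemma one_sub_exp_neg_mem_Icc {w : ℝ} (hw : 0 ≤ w) : 1 - Real.exp (-w) ∈ Icc (0 : ℝ) 1 :=
  ⟨sub_nonneg.2 (Real.exp_le_one_iff.2 (neg_nonpos.2 hw)), by linarith [Real.exp_pos (-w)]⟩

lemma mul_mul_mem_Icc {k B n v : ℝ} (hk : k ∈ Icc 0 B) (hn : 0 ≤ n) (hv : v ∈ Icc (0 : ℝ) 1) :
    k * n * v ∈ Icc 0 (B * n) :=
  ⟨mul_nonneg (mul_nonneg hk.1 hn) hv.1,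
    (mul_le_of_le_one_right (mul_nonneg hk.1 hn) hv.2).trans (mul_le_mul_of_nonneg_right hk.2 hn)⟩

namespace MonotoneOn

variable {f : ℝ → ℝ}

lemma le_iSup_natCast (hf : MonotoneOn f (Ici 0)) (hbdd : BddAbove (range fun m : ℕ => f m))
    {t : ℝ} (ht : 0 ≤ t) : f t ≤ ⨆ m : ℕ, f m :=
  (hf ht (mem_Ici.2 (Nat.cast_nonneg _)) (Nat.le_ceil t)).trans (le_ciSup hbdd ⌈t⌉₊)

lemma tendsto_atTop_iSup_natCast (hf : MonotoneOn f (Ici 0))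
    (hbdd : BddAbove (range fun m : ℕ => f m)) : Tendsto f atTop (𝓝 (⨆ m : ℕ, f m)) := by
  have hseq : Tendsto (fun m : ℕ => f m) atTop (𝓝 (⨆ m : ℕ, f m)) :=
    tendsto_atTop_ciSup (fun i j hij => hf (mem_Ici.2 i.cast_nonneg) (mem_Ici.2 j.cast_nonneg)
      (Nat.cast_le.2 hij)) hbdd
  refine tendsto_of_tendsto_of_tendsto_of_le_of_le' (hseq.comp tendsto_nat_floor_atTop)
    tendsto_const_nhds ?_ ?_
  · filter_upwards [eventually_ge_atTop 0] with t ht using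
      hf (mem_Ici.2 (Nat.cast_nonneg _)) ht (Nat.floor_le ht)
  · filter_upwards [eventually_ge_atTop 0] with t ht using hf.le_iSup_natCast hbdd ht

end MonotoneOn

section TimeIntegral

variable {k v b : ℝ → ℝ} {β n : ℝ}

lemma setIntegral_Icc_mul_mul_mem_Icc (hb : IntegrableOn b (Ici 0)) (hb0 : ∀ τ, 0 ≤ b τ)
    (hβ : 0 ≤ β) (hn : 0 ≤ n) (hk : ∀ τ, 0 ≤ τ → k τ ∈ Icc 0 (β * b τ)) {t : ℝ}
    (hv : ∀ τ ∈ Icc 0 t, v τ ∈ Icc (0 : ℝ) 1) :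
    ∫ τ in Icc 0 t, k τ * n * v τ ∈ Icc 0 (β * n * ∫ τ in Ici 0, b τ) := by
  have hpt : ∀ᵐ τ ∂(volume.restrict (Icc 0 t)), k τ * n * v τ ∈ Icc 0 (β * b τ * n) := by
    filter_upwards [ae_restrict_mem measurableSet_Icc] with τ hτ
    exact mul_mul_mem_Icc (hk τ hτ.1) hn (hv τ hτ)
  refine ⟨integral_nonneg_of_ae (hpt.mono fun τ h => h.1), ?_⟩
  calc ∫ τ in Icc 0 t, k τ * n * v τ
      ≤ ∫ τ in Icc 0 t, β * n * b τ :=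
        integral_mono_of_nonneg (hpt.mono fun τ h => h.1)
          ((hb.mono_set Icc_subset_Ici_self).const_mul _)
          (hpt.mono fun τ h => h.2.trans_eq (mul_right_comm _ _ _))
    _ ≤ ∫ τ in Ici 0, β * n * b τ :=
        setIntegral_mono_set (hb.const_mul _)
          (Eventually.of_forall fun τ => mul_nonneg (mul_nonneg hβ hn) (hb0 τ))
          Icc_subset_Ici_self.eventuallyLE
    _ = β * n * ∫ τ in Ici 0, b τ := integral_const_mul _ _

lemma tendsto_setIntegral_Icc_mul_mul_sub {vₗ : ℝ} (hkm : Measurable k) (hvm : Measurable v)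
    (hb : IntegrableOn b (Ici 0)) (hn : 0 ≤ n) (hk : ∀ τ, 0 ≤ τ → k τ ∈ Icc 0 (β * b τ))
    (hv : ∀ s, 0 ≤ s → v s ∈ Icc (0 : ℝ) 1) (hlim : Tendsto v atTop (𝓝 vₗ)) :
    Tendsto (fun t => ∫ τ in Icc 0 t, k τ * n * v (t - τ)) atTop
      (𝓝 ((∫ τ in Ici 0, k τ) * n * vₗ)) := by
  -- The indicator of `Iic t` moves the growing domain `[0, t]` onto the fixed `[0, ∞)`.
  set F : ℝ → ℝ → ℝ := fun t => (Iic t).indicator fun τ => k τ * n * v (t - τ)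
  have hF : ∀ t, ∫ τ in Icc 0 t, k τ * n * v (t - τ) = ∫ τ in Ici 0, F t τ := fun t => by
    rw [setIntegral_indicator measurableSet_Iic, Ici_inter_Iic]
  have hlimF : Tendsto (fun t => ∫ τ in Ici 0, F t τ) atTop
      (𝓝 (∫ τ in Ici 0, k τ * n * vₗ)) := by
    refine tendsto_integral_filter_of_dominated_convergence (fun τ => β * b τ * n)
      (Eventually.of_forall fun t => (((hkm.mul_const n).mul
        (hvm.comp (measurable_const.sub measurable_id))).indicator
          measurableSet_Iic).aestronglyMeasurable) (Eventually.of_forall fun t => ?_)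
      ((hb.const_mul β).mul_const n) ?_
    · filter_upwards [ae_restrict_mem measurableSet_Ici] with τ hτ
      simp only [F]
      by_cases hτt : τ ∈ Iic t
      · have h := mul_mul_mem_Icc (hk τ hτ) hn (hv _ (sub_nonneg.2 hτt))
        rw [indicator_of_mem hτt, Real.norm_eq_abs, abs_of_nonneg h.1]
        exact h.2
      · rw [indicator_of_notMem hτt, norm_zero]
        exact mul_nonneg ((hk τ hτ).1.trans (hk τ hτ).2) hn
    · refine Eventually.of_forall fun τ => Tendsto.congr' ?_
        ((hlim.comp (tendsto_atTop_add_const_right atTop (-τ) tendsto_id)).const_mul (k τ * n))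
      filter_upwards [eventually_ge_atTop τ] with t ht
      simp only [F, indicator_of_mem (mem_Iic.2 ht), Function.comp_apply, id, sub_eq_add_neg]
  simpa only [hF, integral_mul_const] using hlimF

end TimeIntegral

section RenewalIntegral

variable {X : Type*} [MeasurableSpace X] {μ : Measure X} {κ u : ℝ → X → ℝ} {N c : X → ℝ}
  {b : ℝ → ℝ} {K : ℝ}

lemma integral_setIntegral_Icc_renewal_le (hN : ∀ σ, 0 ≤ N σ) (hb : IntegrableOn b (Ici 0))
    (hb0 : ∀ τ, 0 ≤ b τ) (hK : 0 ≤ K) (hc0 : ∀ σ, 0 ≤ c σ)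
    (hc : Integrable (fun σ => c σ * N σ) μ)
    (hκ : ∀ᵐ σ ∂μ, ∀ τ, 0 ≤ τ → κ τ σ ∈ Icc 0 (K * c σ * b τ))
    (hu : ∀ᵐ σ ∂μ, ∀ s, 0 ≤ s → u s σ ∈ Icc (0 : ℝ) 1) (t : ℝ) :
    ∫ σ, (∫ τ in Icc 0 t, κ τ σ * N σ * u (t - τ) σ) ∂μ
      ≤ K * (∫ τ in Ici 0, b τ) * ∫ σ, c σ * N σ ∂μ := by
  have hpt : ∀ᵐ σ ∂μ, ∫ τ in Icc 0 t, κ τ σ * N σ * u (t - τ) σ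
      ∈ Icc 0 (K * c σ * N σ * ∫ τ in Ici 0, b τ) := by
    filter_upwards [hκ, hu] with σ hκσ huσ
    exact setIntegral_Icc_mul_mul_mem_Icc hb hb0 (mul_nonneg hK (hc0 σ)) (hN σ) hκσ
      fun τ hτ => huσ _ (sub_nonneg.2 hτ.2)
  rw [← integral_const_mul]
  exact integral_mono_of_nonneg (hpt.mono fun σ h => h.1) (hc.const_mul _)
    (hpt.mono fun σ h => h.2.trans_eq (by ring))

lemma tendsto_integral_setIntegral_Icc_renewal {uₗ : X → ℝ} (hκm : Measurable (Function.uncurry κ))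
    (hum : Measurable (Function.uncurry u)) (hNm : Measurable N) (hN : ∀ σ, 0 ≤ N σ)
    (hb : IntegrableOn b (Ici 0)) (hb0 : ∀ τ, 0 ≤ b τ) (hK : 0 ≤ K) (hc0 : ∀ σ, 0 ≤ c σ)
    (hc : Integrable (fun σ => c σ * N σ) μ)
    (hκ : ∀ᵐ σ ∂μ, ∀ τ, 0 ≤ τ → κ τ σ ∈ Icc 0 (K * c σ * b τ))
    (hu : ∀ᵐ σ ∂μ, ∀ s, 0 ≤ s → u s σ ∈ Icc (0 : ℝ) 1)
    (hlim : ∀ᵐ σ ∂μ, Tendsto (fun s => u s σ) atTop (𝓝 (uₗ σ))) :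
    Tendsto (fun t => ∫ σ, (∫ τ in Icc 0 t, κ τ σ * N σ * u (t - τ) σ) ∂μ) atTop
      (𝓝 (∫ σ, (∫ τ in Ici 0, κ τ σ) * N σ * uₗ σ ∂μ)) := by
  refine tendsto_integral_filter_of_dominated_convergence
    (fun σ => K * (∫ τ in Ici 0, b τ) * (c σ * N σ)) (Eventually.of_forall fun t => ?_)
    (Eventually.of_forall fun t => ?_) (hc.const_mul _) ?_
  · have hmeas : Measurable fun p : X × ℝ => κ p.2 p.1 * N p.1 * u (t - p.2) p.1 :=
      ((hκm.comp measurable_swap).mul (hNm.comp measurable_fst)).mul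
        (hum.comp ((measurable_const.sub measurable_snd).prodMk measurable_fst))
    exact hmeas.stronglyMeasurable.integral_prod_right'.aestronglyMeasurable
  · filter_upwards [hκ, hu] with σ hκσ huσ
    have h := setIntegral_Icc_mul_mul_mem_Icc hb hb0 (mul_nonneg hK (hc0 σ)) (hN σ) hκσ (t := t)
      fun τ hτ => huσ _ (sub_nonneg.2 hτ.2)
    rw [Real.norm_eq_abs, abs_of_nonneg h.1]
    exact h.2.trans_eq (by ring)
  · filter_upwards [hκ, hu, hlim] with σ hκσ huσ hlimσ
    exact tendsto_setIntegral_Icc_mul_mul_sub (hκm.comp (measurable_id.prodMk measurable_const))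
      (hum.comp (measurable_id.prodMk measurable_const)) hb (hN σ) hκσ huσ hlimσ

end RenewalIntegral

section WeightedL1

variable {X : Type*} [MeasurableSpace X] {μ : Measure X} {F : ℝ → X → ℝ} {f g w : X → ℝ}

lemma tendsto_integral_abs_sub_mul_atTop (hF : ∀ t, AEStronglyMeasurable (F t) μ)
    (hw : AEStronglyMeasurable w μ) (hw0 : ∀ x, 0 ≤ w x) (hg : Integrable (fun x => g x * w x) μ)
    (hbound : ∀ᵐ x ∂μ, ∀ t, 0 ≤ t → |F t x - f x| ≤ g x)
    (hlim : ∀ᵐ x ∂μ, Tendsto (fun t => F t x) atTop (𝓝 (f x))) :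
    Tendsto (fun t => ∫ x, |F t x - f x| * w x ∂μ) atTop (𝓝 0) := by
  have hf := aestronglyMeasurable_of_tendsto_ae atTop hF hlim
  have h := tendsto_integral_filter_of_dominated_convergence (F := fun t x => |F t x - f x| * w x)
    (fun x => g x * w x)
    (Eventually.of_forall fun t => ((hF t).sub hf).norm.mul hw) ?_ hg
    (hlim.mono fun x hx => (hx.sub_const (f x)).abs.mul_const (w x))
  · simpa using h
  · filter_upwards [eventually_ge_atTop 0] with t ht
    filter_upwards [hbound] with x hx
    rw [Real.norm_eq_abs, abs_of_nonneg (mul_nonneg (abs_nonneg _) (hw0 x))]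
    exact mul_le_mul_of_nonneg_right (hx t ht) (hw0 x)

lemma exists_tendsto_integral_abs_sub_mul_of_monotoneOn
    (hF : ∀ t, AEStronglyMeasurable (F t) μ) (hw : AEStronglyMeasurable w μ) (hw0 : ∀ x, 0 ≤ w x)
    (hg : Integrable (fun x => g x * w x) μ)
    (hmono : ∀ᵐ x ∂μ, MonotoneOn (fun t => F t x) (Ici 0)) (hF0 : ∀ᵐ x ∂μ, 0 ≤ F 0 x)
    (hle : ∀ᵐ x ∂μ, ∀ m : ℕ, F m x ≤ g x) :
    ∃ f : X → ℝ, Integrable (fun x => f x * w x) μ ∧ (∀ᵐ x ∂μ, 0 ≤ f x) ∧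
      Tendsto (fun t => ∫ x, |F t x - f x| * w x ∂μ) atTop (𝓝 0) ∧
      ∀ᵐ x ∂μ, Tendsto (fun t => F t x) atTop (𝓝 (f x)) := by
  have hsup : ∀ᵐ x ∂μ, Tendsto (fun t => F t x) atTop (𝓝 (⨆ m : ℕ, F m x)) ∧
      ∀ t, 0 ≤ t → 0 ≤ F t x ∧ F t x ≤ ⨆ m : ℕ, F m x ∧ (⨆ m : ℕ, F m x) ≤ g x := by
    filter_upwards [hmono, hF0, hle] with x hx hx0 hxg
    have hbdd : BddAbove (range fun m : ℕ => F m x) := ⟨g x, forall_mem_range.2 hxg⟩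
    exact ⟨hx.tendsto_atTop_iSup_natCast hbdd, fun t ht =>
      ⟨hx0.trans (hx self_mem_Ici ht ht), hx.le_iSup_natCast hbdd ht, ciSup_le hxg⟩⟩
  have hlim := hsup.mono fun x h => h.1
  refine ⟨fun x => ⨆ m : ℕ, F m x, ?_, hsup.mono fun x h => (h.2 0 le_rfl).1.trans
    (h.2 0 le_rfl).2.1, tendsto_integral_abs_sub_mul_atTop hF hw hw0 hg ?_ hlim, hlim⟩
  · refine hg.mono' ((aestronglyMeasurable_of_tendsto_ae atTop hF hlim).mul hw) ?_
    filter_upwards [hsup] with x hx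
    obtain ⟨h0, h1, h2⟩ := hx.2 0 le_rfl
    rw [Real.norm_eq_abs, abs_of_nonneg (mul_nonneg (h0.trans h1) (hw0 x))]
    exact mul_le_mul_of_nonneg_right h2 (hw0 x)
  · filter_upwards [hsup] with x hx t ht
    obtain ⟨h0, h1, h2⟩ := hx.2 t ht
    rw [abs_sub_comm, abs_of_nonneg (sub_nonneg.2 h1)]
    linarith

end WeightedL1

theorem cumulative_FOI_limit_final_size_general
    {n : ℕ} (Ω : Set (Fin n → ℝ)) (hΩ : MeasurableSet Ω)
    (N : (Fin n → ℝ) → ℝ) (hNmeas : Measurable N) (hNnn : ∀ x, 0 ≤ N x)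
    (A : ℝ → (Fin n → ℝ) → (Fin n → ℝ) → ℝ)
    (hAmeas : Measurable (fun p : ℝ × (Fin n → ℝ) × (Fin n → ℝ) => A p.1 p.2.1 p.2.2))
    (hAnn : ∀ τ x σ, 0 ≤ A τ x σ)
    -- Assumption 1(1)
    (α : ℝ) (hα : 1 < α)
    (a : (Fin n → ℝ) → ℝ) (b : ℝ → ℝ) (c : (Fin n → ℝ) → ℝ)
    (hann : ∀ x, 0 ≤ a x) (hbnn : ∀ τ, 0 ≤ b τ) (hcnn : ∀ σ, 0 ≤ c σ)
    (haN : IntegrableOn (fun x => a x * N x) Ω)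
    (hbint : IntegrableOn b (Ici 0))
    (hcN : IntegrableOn (fun x => c x * N x) Ω)
    (hAbound : ∀ τ ∈ Ici (0:ℝ), ∀ x ∈ Ω, ∀ σ ∈ Ω,
      a x * b τ * c σ ≤ A τ x σ ∧ A τ x σ ≤ α * (a x * b τ * c σ))
    (H : ℝ → (Fin n → ℝ) → ℝ) (Q : ℝ → ℝ)
    (hQbdd : ∃ M, ∀ t ∈ Ici (0:ℝ), Q t ≤ M)
    (hHbound : ∀ t ∈ Ici (0:ℝ), ∀ x ∈ Ω, a x * Q t ≤ H t x ∧ H t x ≤ α * (a x * Q t))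
    -- H is nondecreasing in time with pointwise limit H∞
    (Hinf : (Fin n → ℝ) → ℝ)
    (hHlim : ∀ x, Tendsto (fun t => H t x) atTop (nhds (Hinf x)))
    -- W is a global nonnegative continuous solution, monotone in time
    (W : ℝ → (Fin n → ℝ) → ℝ)
    (hWmeas : Measurable (Function.uncurry W))
    (hWnn : ∀ t ∈ Ici (0:ℝ), ∀ᵐ x ∂(volume.restrict Ω), 0 ≤ W t x)
    (hWmono : ∀ᵐ x ∂(volume.restrict Ω),
      ∀ s t : ℝ, 0 ≤ s → s ≤ t → W s x ≤ W t x)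
    (hWfix : ∀ t ∈ Ici (0:ℝ), ∀ᵐ x ∂(volume.restrict Ω),
      W t x = H t x +
        ∫ σ in Ω, ∫ τ in Icc (0:ℝ) t, A τ x σ * N σ * (1 - Real.exp (-(W (t - τ) σ)))) :
    ∃ Winf : (Fin n → ℝ) → ℝ,
      IntegrableOn (fun x => Winf x * N x) Ω ∧
      (∀ᵐ x ∂(volume.restrict Ω), 0 ≤ Winf x) ∧
      Tendsto (fun t => ∫ x in Ω, |W t x - Winf x| * N x) atTop (nhds 0) ∧
      (∀ᵐ x ∂(volume.restrict Ω),
        Winf x = Hinf x +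
          ∫ σ in Ω, (∫ τ in Ici (0:ℝ), A τ x σ) * N σ * (1 - Real.exp (-(Winf σ)))) := by
  obtain ⟨M, hM⟩ := hQbdd
  have hK (x : Fin n → ℝ) : 0 ≤ α * a x := mul_nonneg (by linarith) (hann x)
  have hκ (x : Fin n → ℝ) (hx : x ∈ Ω) : ∀ᵐ σ ∂(volume.restrict Ω), ∀ τ, 0 ≤ τ →
      A τ x σ ∈ Icc 0 (α * a x * c σ * b τ) := by
    filter_upwards [ae_restrict_mem hΩ] with σ hσ τ hτ
    exact ⟨hAnn τ x σ, (hAbound τ hτ x hx σ hσ).2.trans_eq (by ring)⟩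
  have hmono : ∀ᵐ x ∂(volume.restrict Ω), MonotoneOn (fun t => W t x) (Ici 0) :=
    hWmono.mono fun x hx s hs t _ hst => hx s t hs hst
  set u : ℝ → (Fin n → ℝ) → ℝ := fun s σ => 1 - Real.exp (-(W s σ))
  have hu : ∀ᵐ σ ∂(volume.restrict Ω), ∀ s, 0 ≤ s → u s σ ∈ Icc (0 : ℝ) 1 := by
    filter_upwards [hmono, hWnn 0 self_mem_Ici] with σ hσ h0 s hs
    exact one_sub_exp_neg_mem_Icc (h0.trans (hσ self_mem_Ici hs hs))
  set C := α * (M + (∫ τ in Ici 0, b τ) * ∫ σ in Ω, c σ * N σ) with hC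
  have hWC : ∀ᵐ x ∂(volume.restrict Ω), ∀ m : ℕ, W m x ≤ C * a x := by
    refine ae_all_iff.2 fun m => ?_
    have hm : (m : ℝ) ∈ Ici 0 := mem_Ici.2 m.cast_nonneg
    filter_upwards [ae_restrict_mem hΩ, hWfix m hm] with x hx hfix
    have hR := integral_setIntegral_Icc_renewal_le hNnn hbint hbnn (hK x) hcnn hcN (hκ x hx) hu m
    have hQ := mul_le_mul_of_nonneg_left (hM m hm) (hK x)
    rw [hfix, hC]
    linarith [(hHbound m hm x hx).2]
  obtain ⟨Winf, hint, hnn, hY, hlim⟩ := exists_tendsto_integral_abs_sub_mul_of_monotoneOn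
    (fun t => (hWmeas.comp measurable_prodMk_left).aestronglyMeasurable)
    hNmeas.aestronglyMeasurable hNnn (by simpa only [mul_assoc] using haN.const_mul C) hmono
    (hWnn 0 self_mem_Ici) hWC
  refine ⟨Winf, hint, hnn, hY, ?_⟩
  have hulim : ∀ᵐ σ ∂(volume.restrict Ω),
      Tendsto (fun s => u s σ) atTop (𝓝 (1 - Real.exp (-(Winf σ)))) :=
    hlim.mono fun σ h => ((Real.continuous_exp.tendsto _).comp h.neg).const_sub 1
  filter_upwards [ae_all_iff.2 fun m : ℕ => hWfix m (mem_Ici.2 m.cast_nonneg), hlim,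
    ae_restrict_mem hΩ] with x hfix hxlim hx
  have hR := (tendsto_integral_setIntegral_Icc_renewal (κ := fun τ σ => A τ x σ) (u := u)
    (hAmeas.comp (measurable_fst.prodMk (measurable_const.prodMk measurable_snd)))
    (measurable_const.sub (Real.measurable_exp.comp hWmeas.neg)) hNmeas hNnn hbint hbnn (hK x)
    hcnn hcN (hκ x hx) hu hulim).comp tendsto_natCast_atTop_atTop
  exact tendsto_nhds_unique (hxlim.comp tendsto_natCast_atTop_atTop)
    ((((hHlim x).comp tendsto_natCast_atTop_atTop).add hR).congr fun m => (hfix m).symm)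

/-- a global, monotone, nonnegative continuous solution `W` of the renewal
equation converges in `Y` to a limit `W_∞` satisfying the final size equation
`W_∞(x) = H(∞,x) + ∫_Ω Θ(x,σ) N(σ)(1 - e^{-W_∞(σ)}) dσ` with `Θ(x,σ) = ∫_0^∞ A(τ,x,σ)dτ`. -/
theorem cumulative_FOI_limit_final_size
    {n : ℕ} (Ω : Set (Fin n → ℝ)) (hΩ : MeasurableSet Ω)
    (N : (Fin n → ℝ) → ℝ) (hNmeas : Measurable N) (hNnn : ∀ x, 0 ≤ N x)
    (hNint : IntegrableOn N Ω)
    (hNpos : ∀ᵐ x ∂(volume.restrict Ω), 0 < N x)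
    (A : ℝ → (Fin n → ℝ) → (Fin n → ℝ) → ℝ)
    (hAmeas : Measurable (fun p : ℝ × (Fin n → ℝ) × (Fin n → ℝ) => A p.1 p.2.1 p.2.2))
    (hAnn : ∀ τ x σ, 0 ≤ A τ x σ)
    -- Assumption 1(1)
    (α : ℝ) (hα : 1 < α)
    (a : (Fin n → ℝ) → ℝ) (b : ℝ → ℝ) (c : (Fin n → ℝ) → ℝ)
    (hameas : Measurable a) (hbmeas : Measurable b) (hcmeas : Measurable c)
    (hann : ∀ x, 0 ≤ a x) (hbnn : ∀ τ, 0 ≤ b τ) (hcnn : ∀ σ, 0 ≤ c σ)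
    (haN : IntegrableOn (fun x => a x * N x) Ω)
    (hbint : IntegrableOn b (Ici 0))
    (hcN : IntegrableOn (fun x => c x * N x) Ω)
    (hc2N : IntegrableOn (fun x => c x ^ 2 * N x) Ω)
    (hAbound : ∀ τ ∈ Ici (0:ℝ), ∀ x ∈ Ω, ∀ σ ∈ Ω,
      a x * b τ * c σ ≤ A τ x σ ∧ A τ x σ ≤ α * (a x * b τ * c σ))
    (H : ℝ → (Fin n → ℝ) → ℝ) (Q : ℝ → ℝ)
    (hHmeas : Measurable (Function.uncurry H))
    (hQcont : ContinuousOn Q (Ici 0)) (hQbdd : ∃ M, ∀ t ∈ Ici (0:ℝ), Q t ≤ M)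
    (hQnn : ∀ t, 0 ≤ Q t)
    (hHbound : ∀ t ∈ Ici (0:ℝ), ∀ x ∈ Ω, a x * Q t ≤ H t x ∧ H t x ≤ α * (a x * Q t))
    -- H is nondecreasing in time with pointwise limit H∞
    (Hinf : (Fin n → ℝ) → ℝ)
    (hHmono : ∀ x, MonotoneOn (fun t => H t x) (Ici 0))
    (hHlim : ∀ x, Tendsto (fun t => H t x) atTop (nhds (Hinf x)))
    -- W is a global nonnegative continuous solution, monotone in time
    (W : ℝ → (Fin n → ℝ) → ℝ)
    (hWmeas : Measurable (Function.uncurry W))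
    (hWY : ∀ t ∈ Ici (0:ℝ), IntegrableOn (fun x => W t x * N x) Ω)
    (hWnn : ∀ t ∈ Ici (0:ℝ), ∀ᵐ x ∂(volume.restrict Ω), 0 ≤ W t x)
    (hWcont : ∀ t ∈ Ici (0:ℝ), Tendsto (fun s => ∫ x in Ω, |W s x - W t x| * N x)
      (nhdsWithin t (Ici 0)) (nhds 0))
    (hWmono : ∀ᵐ x ∂(volume.restrict Ω),
      ∀ s t : ℝ, 0 ≤ s → s ≤ t → W s x ≤ W t x)
    (hWfix : ∀ t ∈ Ici (0:ℝ), ∀ᵐ x ∂(volume.restrict Ω),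
      W t x = H t x +
        ∫ σ in Ω, ∫ τ in Icc (0:ℝ) t, A τ x σ * N σ * (1 - Real.exp (-(W (t - τ) σ)))) :
    ∃ Winf : (Fin n → ℝ) → ℝ,
      IntegrableOn (fun x => Winf x * N x) Ω ∧
      (∀ᵐ x ∂(volume.restrict Ω), 0 ≤ Winf x) ∧
      Tendsto (fun t => ∫ x in Ω, |W t x - Winf x| * N x) atTop (nhds 0) ∧
      (∀ᵐ x ∂(volume.restrict Ω),
        Winf x = Hinf x +
          ∫ σ in Ω, (∫ τ in Ici (0:ℝ), A τ x σ) * N σ * (1 - Real.exp (-(Winf σ)))) :=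
  cumulative_FOI_limit_final_size_general Ω hΩ N hNmeas hNnn A hAmeas hAnn α hα a b c hann hbnn hcnn
    haN hbint hcN hAbound H Q hQbdd hHbound Hinf hHlim W hWmeas hWnn hWmono hWfix
end

section
/- Let Ω = [0,∞). Under Assumptions 1(1) and 2, the next generation operator T, defined by (Tφ)(x) = N(x)∫_Ω Θ(x,σ)φ(σ) dσ with Θ(x,σ) = ∫_0^∞ A(τ,x,σ) dτ, is a well-defined bounded linear operator on L¹(Ω) and is a compact operator (the image of every bounded subset of L¹(Ω) has compact closure). -/
/-!
`T` is the integral operator on `L¹(0, ∞)` with kernel `K(x, σ) = N(x) Θ(x, σ)`. By Assumption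
1(1), `|K(x, σ)| ≤ α L (sup c) a(x) N(x)`, an integrable majorant independent of `σ`, so the
columns `K(·, σ)` are uniformly bounded in `L¹` and `T` is bounded. For compactness, replace each
column by its averages over the cells `[jδ, (j+1)δ)`, `j < m`: the resulting degenerate kernel
gives a finite-rank operator. On `[0, mδ)` the `L¹` error of averaging is at most twice the
`L¹`-modulus of continuity of the columns under translations by `|h| < δ`, small uniformly in `σ`
by Assumption 2; beyond `mδ` it is the tail of the majorant. So `T` is an operator-norm limit of
finite-rank operators, hence compact.
-/

open MeasureTheory Set Filter Topology
open scoped ENNReal NNReal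

theorem isCompactOperator_of_forall_mem_span {𝕜 E F ι : Type*} [NontriviallyNormedField 𝕜]
    [ProperSpace 𝕜] [SeminormedAddCommGroup E] [NormedSpace 𝕜 E] [NormedAddCommGroup F]
    [NormedSpace 𝕜 F] [Finite ι] (T : E →L[𝕜] F) (e : ι → F)
    (hT : ∀ x, T x ∈ Submodule.span 𝕜 (range e)) : IsCompactOperator T := by
  have := FiniteDimensional.span_of_finite 𝕜 (finite_range e)
  have := FiniteDimensional.proper 𝕜 (Submodule.span 𝕜 (range e))
  exact (isCompactOperator_of_locallyCompactSpace_dom (T.codRestrict _ hT)).clm_comp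
    (Submodule.subtypeL _)

namespace MeasureTheory

section IntegralOperator

variable {X Y : Type*} [MeasurableSpace X] [MeasurableSpace Y] {μ : Measure X} {ν : Measure Y}
  {K : X → Y → ℝ} {C : ℝ≥0}

theorem lintegral_enorm_kernel_mul_le (hC : ∀ᵐ y ∂ν, ∫⁻ x, ‖K x y‖ₑ ∂μ ≤ C) (f : Y → ℝ) :
    ∫⁻ y, ∫⁻ x, ‖K x y * f y‖ₑ ∂μ ∂ν ≤ C * ∫⁻ y, ‖f y‖ₑ ∂ν := by
  simp_rw [enorm_mul, lintegral_mul_const' _ _ enorm_ne_top]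
  rw [← lintegral_const_mul' _ _ ENNReal.coe_ne_top]
  exact lintegral_mono_ae (hC.mono fun y hy => mul_le_mul_left hy _)

variable [SFinite μ] [SFinite ν]

theorem integrable_kernel_mul (hK : AEStronglyMeasurable (Function.uncurry K) (μ.prod ν))
    (hC : ∀ᵐ y ∂ν, ∫⁻ x, ‖K x y‖ₑ ∂μ ≤ C) {f : Y → ℝ} (hf : Integrable f ν) :
    Integrable (fun p : X × Y => K p.1 p.2 * f p.2) (μ.prod ν) := by
  have hm : AEStronglyMeasurable (fun p : X × Y => K p.1 p.2 * f p.2) (μ.prod ν) :=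
    hK.mul hf.1.comp_snd
  refine ⟨hm, ?_⟩
  rw [HasFiniteIntegral, lintegral_prod_symm _ hm.enorm]
  exact (lintegral_enorm_kernel_mul_le hC f).trans_lt
    (ENNReal.mul_lt_top ENNReal.coe_lt_top hf.2)

theorem lintegral_enorm_integral_kernel_mul_le
    (hK : AEStronglyMeasurable (Function.uncurry K) (μ.prod ν))
    (hC : ∀ᵐ y ∂ν, ∫⁻ x, ‖K x y‖ₑ ∂μ ≤ C) {f : Y → ℝ} (hf : AEStronglyMeasurable f ν) :
    ∫⁻ x, ‖∫ y, K x y * f y ∂ν‖ₑ ∂μ ≤ C * ∫⁻ y, ‖f y‖ₑ ∂ν := by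
  calc ∫⁻ x, ‖∫ y, K x y * f y ∂ν‖ₑ ∂μ ≤ ∫⁻ x, ∫⁻ y, ‖K x y * f y‖ₑ ∂ν ∂μ :=
        lintegral_mono fun x => enorm_integral_le_lintegral_enorm _
    _ = ∫⁻ y, ∫⁻ x, ‖K x y * f y‖ₑ ∂μ ∂ν :=
        lintegral_lintegral_swap (hK.mul hf.comp_snd).enorm
    _ ≤ C * ∫⁻ y, ‖f y‖ₑ ∂ν := lintegral_enorm_kernel_mul_le hC f

theorem norm_le_of_ae_eq_integral_kernel_mul
    (hK : AEStronglyMeasurable (Function.uncurry K) (μ.prod ν))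
    (hC : ∀ᵐ y ∂ν, ∫⁻ x, ‖K x y‖ₑ ∂μ ≤ C) {φ : Lp ℝ 1 ν} {ψ : Lp ℝ 1 μ}
    (hψ : ψ =ᵐ[μ] fun x => ∫ y, K x y * φ y ∂ν) : ‖ψ‖ ≤ C * ‖φ‖ := by
  rw [Lp.norm_def, Lp.norm_def, eLpNorm_congr_ae hψ, eLpNorm_one_eq_lintegral_enorm,
    eLpNorm_one_eq_lintegral_enorm, ← ENNReal.coe_toReal, ← ENNReal.toReal_mul]
  refine ENNReal.toReal_mono ?_
    (lintegral_enorm_integral_kernel_mul_le hK hC (Lp.aestronglyMeasurable φ))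
  rw [← eLpNorm_one_eq_lintegral_enorm]
  exact ENNReal.mul_ne_top ENNReal.coe_ne_top (Lp.eLpNorm_ne_top φ)

noncomputable def integralOperator (hK : AEStronglyMeasurable (Function.uncurry K) (μ.prod ν))
    (hC : ∀ᵐ y ∂ν, ∫⁻ x, ‖K x y‖ₑ ∂μ ≤ C) : Lp ℝ 1 ν →L[ℝ] Lp ℝ 1 μ :=
  LinearMap.mkContinuous
    { toFun φ := Integrable.toL1 (fun x => ∫ y, K x y * φ y ∂ν)
        (integrable_kernel_mul hK hC (L1.integrable_coeFn φ)).integral_prod_left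
      map_add' φ ψ := by
        rw [← Integrable.toL1_add, Integrable.toL1_eq_toL1_iff]
        filter_upwards [(integrable_kernel_mul hK hC (L1.integrable_coeFn φ)).prod_right_ae,
          (integrable_kernel_mul hK hC (L1.integrable_coeFn ψ)).prod_right_ae] with x hφ hψ
        rw [Pi.add_apply, ← integral_add hφ hψ]
        refine integral_congr_ae ?_
        filter_upwards [Lp.coeFn_add φ ψ] with y hy
        rw [hy, Pi.add_apply, mul_add]
      map_smul' r φ := by
        rw [RingHom.id_apply, ← Integrable.toL1_smul, Integrable.toL1_eq_toL1_iff]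
        refine Eventually.of_forall fun x => ?_
        show ∫ y, K x y * (r • φ) y ∂ν = r • ∫ y, K x y * φ y ∂ν
        rw [← integral_smul]
        refine integral_congr_ae ?_
        filter_upwards [Lp.coeFn_smul r φ] with y hy
        rw [hy, Pi.smul_apply, smul_eq_mul, smul_eq_mul, mul_left_comm] }
    C fun φ => norm_le_of_ae_eq_integral_kernel_mul hK hC (Integrable.coeFn_toL1
      (integrable_kernel_mul hK hC (L1.integrable_coeFn φ)).integral_prod_left)

variable (hK : AEStronglyMeasurable (Function.uncurry K) (μ.prod ν))
  (hC : ∀ᵐ y ∂ν, ∫⁻ x, ‖K x y‖ₑ ∂μ ≤ C)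

theorem integralOperator_apply (φ : Lp ℝ 1 ν) :
    integralOperator hK hC φ =ᵐ[μ] fun x => ∫ y, K x y * φ y ∂ν :=
  Integrable.coeFn_toL1 (f := fun x => ∫ y, K x y * φ y ∂ν)
    (integrable_kernel_mul hK hC (L1.integrable_coeFn φ)).integral_prod_left

theorem norm_integralOperator_sub_le {K' : X → Y → ℝ}
    (hK' : AEStronglyMeasurable (Function.uncurry K') (μ.prod ν)) {C' : ℝ≥0}
    (hC' : ∀ᵐ y ∂ν, ∫⁻ x, ‖K' x y‖ₑ ∂μ ≤ C') {D : ℝ≥0}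
    (hD : ∀ᵐ y ∂ν, ∫⁻ x, ‖K x y - K' x y‖ₑ ∂μ ≤ D) :
    ‖integralOperator hK hC - integralOperator hK' hC'‖ ≤ D := by
  refine ContinuousLinearMap.opNorm_le_bound _ D.2 fun φ =>
    norm_le_of_ae_eq_integral_kernel_mul (K := fun x y => K x y - K' x y) (hK.sub hK') hD ?_
  have hφ := L1.integrable_coeFn φ
  filter_upwards [Lp.coeFn_sub (integralOperator hK hC φ) (integralOperator hK' hC' φ),
    integralOperator_apply hK hC φ, integralOperator_apply hK' hC' φ,
    (integrable_kernel_mul hK hC hφ).prod_right_ae,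
    (integrable_kernel_mul hK' hC' hφ).prod_right_ae] with x hsub h h' hi hi'
  rw [sub_apply, hsub, Pi.sub_apply, h, h', ← integral_sub hi hi']
  simp only [sub_mul]

theorem integralOperator_mem_span {ι : Type*} (s : Finset ι) {u : ι → X → ℝ} {v : ι → Y → ℝ}
    (hKuv : ∀ x y, K x y = ∑ i ∈ s, u i x * v i y) (hu : ∀ i, MemLp (u i) 1 μ)
    (hv : ∀ i, MemLp (v i) ∞ ν) (φ : Lp ℝ 1 ν) :
    integralOperator hK hC φ ∈ Submodule.span ℝ (range fun i : s => (hu i).toLp (u i)) := by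
  have hvφ (i : ι) : Integrable (fun y => v i y * φ y) ν :=
    (hv i).integrable_mul (Lp.memLp φ)
  have heq : integralOperator hK hC φ = ∑ i ∈ s, (∫ y, v i y * φ y ∂ν) • (hu i).toLp (u i) := by
    refine Lp.ext ?_
    have hterm : ∀ᵐ x ∂μ, ∀ i ∈ s, ((∫ y, v i y * φ y ∂ν) • (hu i).toLp (u i)) x
        = (∫ y, v i y * φ y ∂ν) * u i x := by
      refine (eventually_all_finset s).2 fun i _ => ?_
      filter_upwards [Lp.coeFn_smul (∫ y, v i y * φ y ∂ν) ((hu i).toLp (u i)),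
        (hu i).coeFn_toLp] with x h h'
      rw [h, Pi.smul_apply, h', smul_eq_mul]
    filter_upwards [integralOperator_apply hK hC φ, Lp.coeFn_finsetSum s
        fun i => (∫ y, v i y * φ y ∂ν) • (hu i).toLp (u i), hterm]
      with x happly hsum hterm
    rw [happly, hsum, Finset.sum_apply, Finset.sum_congr rfl hterm]
    simp_rw [hKuv, Finset.sum_mul, mul_assoc]
    rw [integral_finsetSum s fun i _ => (hvφ i).const_mul (u i x)]
    simp_rw [integral_const_mul, mul_comm]
  rw [heq]
  exact Submodule.sum_mem _ fun i hi =>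
    Submodule.smul_mem _ _ (Submodule.subset_span ⟨⟨i, hi⟩, rfl⟩)

end IntegralOperator

section StepApproximation

def gridCell (δ : ℝ) (j : ℕ) : Set ℝ := Ico (j * δ) ((j + 1) * δ)

noncomputable def stepApprox (δ : ℝ) (m : ℕ) (g : ℝ → ℝ) (x : ℝ) : ℝ :=
  ∑ j ∈ Finset.range m, (gridCell δ j).indicator 1 x * (δ⁻¹ * ∫ y in gridCell δ j, g y)

variable {δ x : ℝ} {j m : ℕ} {g : ℝ → ℝ}

theorem gridCell_subset_Ici (hδ : 0 ≤ δ) (j : ℕ) : gridCell δ j ⊆ Ici 0 :=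
  fun _ hy => (by positivity : (0 : ℝ) ≤ j * δ).trans hy.1

theorem gridCell_subset_Ico (hδ : 0 ≤ δ) (hj : j < m) : gridCell δ j ⊆ Ico 0 (m * δ) := by
  have hjm : (j : ℝ) + 1 ≤ m := by exact_mod_cast hj
  exact fun y hy => ⟨gridCell_subset_Ici hδ j hy, hy.2.trans_le (by gcongr)⟩

theorem measurableSet_gridCell (δ : ℝ) (j : ℕ) : MeasurableSet (gridCell δ j) :=
  measurableSet_Ico

theorem volume_gridCell (δ : ℝ) (j : ℕ) : volume (gridCell δ j) = ENNReal.ofReal δ := by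
  rw [gridCell, Real.volume_Ico]
  ring_nf

theorem pairwise_disjoint_gridCell (δ : ℝ) : Pairwise (Function.onFun Disjoint (gridCell δ)) := by
  intro i j hij
  have := pairwise_disjoint_Ico_zsmul δ (Nat.cast_injective.ne hij : (i : ℤ) ≠ j)
  simpa only [Function.onFun, gridCell, zsmul_eq_mul, Int.cast_add, Int.cast_natCast,
    Int.cast_one] using this

theorem exists_mem_gridCell (hδ : 0 < δ) (hx : x ∈ Ico 0 (m * δ)) :
    ∃ j < m, x ∈ gridCell δ j := by
  have hxδ : 0 ≤ x / δ := div_nonneg hx.1 hδ.le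
  refine ⟨⌊x / δ⌋₊, (Nat.floor_lt hxδ).2 ((div_lt_iff₀ hδ).2 hx.2),
    (le_div_iff₀ hδ).1 (Nat.floor_le hxδ), (div_lt_iff₀ hδ).1 (Nat.lt_floor_add_one _)⟩

theorem stepApprox_of_mem_gridCell (hj : j < m) (hx : x ∈ gridCell δ j) :
    stepApprox δ m g x = δ⁻¹ * ∫ y in gridCell δ j, g y := by
  rw [stepApprox, Finset.sum_eq_single_of_mem j (Finset.mem_range.2 hj), indicator_of_mem hx,
    Pi.one_apply, one_mul]
  intro i _ hij
  rw [indicator_of_notMem fun hxi => (pairwise_disjoint_gridCell δ hij).ne_of_mem hxi hx rfl,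
    zero_mul]

theorem stepApprox_of_notMem (hδ : 0 ≤ δ) (hx : x ∉ Ico 0 (m * δ)) : stepApprox δ m g x = 0 :=
  Finset.sum_eq_zero fun j hj => by
    rw [indicator_of_notMem fun hxj => hx (gridCell_subset_Ico hδ (Finset.mem_range.1 hj) hxj),
      zero_mul]

theorem lintegral_enorm_stepApprox_le (hδ : 0 < δ) :
    ∫⁻ x in Ici 0, ‖stepApprox δ m g x‖ₑ ≤ ∫⁻ x in Ici 0, ‖g x‖ₑ := by
  have hterm (j : ℕ) (x : ℝ) : ‖(gridCell δ j).indicator 1 x * (δ⁻¹ * ∫ y in gridCell δ j, g y)‖ₑ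
      = (gridCell δ j).indicator (fun _ => ‖δ⁻¹ * ∫ y in gridCell δ j, g y‖ₑ) x := by
    by_cases hx : x ∈ gridCell δ j <;> simp [hx]
  calc ∫⁻ x in Ici 0, ‖stepApprox δ m g x‖ₑ
      ≤ ∫⁻ x, ∑ j ∈ Finset.range m,
          (gridCell δ j).indicator (fun _ => ‖δ⁻¹ * ∫ y in gridCell δ j, g y‖ₑ) x := by
        refine setLIntegral_le_lintegral _ _ |>.trans (lintegral_mono fun x => ?_)
        simp_rw [← hterm]
        exact enorm_sum_le _ _
    _ = ∑ j ∈ Finset.range m, ‖∫ y in gridCell δ j, g y‖ₑ := by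
        rw [lintegral_finsetSum _ fun j _ =>
          measurable_const.indicator (measurableSet_gridCell δ j)]
        refine Finset.sum_congr rfl fun j _ => ?_
        rw [lintegral_indicator_const (measurableSet_gridCell δ j), volume_gridCell, enorm_mul,
          Real.enorm_eq_ofReal (inv_nonneg.2 hδ.le), mul_right_comm,
          ← ENNReal.ofReal_mul (inv_nonneg.2 hδ.le), inv_mul_cancel₀ hδ.ne', ENNReal.ofReal_one,
          one_mul]
    _ ≤ ∑ j ∈ Finset.range m, ∫⁻ x in gridCell δ j, ‖g x‖ₑ :=
        Finset.sum_le_sum fun j _ => enorm_integral_le_lintegral_enorm _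
    _ = ∫⁻ x in ⋃ j ∈ Finset.range m, gridCell δ j, ‖g x‖ₑ :=
        (lintegral_biUnion_finset ((pairwise_disjoint_gridCell δ).set_pairwise _)
          (fun _ _ => measurableSet_gridCell δ _) _).symm
    _ ≤ ∫⁻ x in Ici 0, ‖g x‖ₑ :=
        lintegral_mono_set (iUnion₂_subset fun j _ => gridCell_subset_Ici hδ.le j)

theorem enorm_sub_gridCell_average_le (hδ : 0 < δ) (hg : IntegrableOn g (gridCell δ j)) :
    ‖g x - δ⁻¹ * ∫ y in gridCell δ j, g y‖ₑ
      ≤ ENNReal.ofReal δ⁻¹ * ∫⁻ y in gridCell δ j, ‖g y - g x‖ₑ := by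
  have hmean : δ⁻¹ * ∫ _ in gridCell δ j, g x = g x := by
    rw [setIntegral_const, measureReal_def, volume_gridCell, ENNReal.toReal_ofReal hδ.le,
      smul_eq_mul, inv_mul_cancel_left₀ hδ.ne']
  have hconst : IntegrableOn (fun _ => g x) (gridCell δ j) :=
    integrableOn_const (by simp [volume_gridCell])
  calc ‖g x - δ⁻¹ * ∫ y in gridCell δ j, g y‖ₑ
      = ‖δ⁻¹ * ∫ y in gridCell δ j, (g x - g y)‖ₑ := by
        rw [integral_sub hconst hg, mul_sub, hmean]
    _ = ENNReal.ofReal δ⁻¹ * ‖∫ y in gridCell δ j, (g x - g y)‖ₑ := by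
        rw [enorm_mul, Real.enorm_eq_ofReal (inv_nonneg.2 hδ.le)]
    _ ≤ ENNReal.ofReal δ⁻¹ * ∫⁻ y in gridCell δ j, ‖g y - g x‖ₑ := by
        gcongr
        simpa only [enorm_sub_rev] using enorm_integral_le_lintegral_enorm _

theorem setLIntegral_gridCell_eq_shift (hx : x ∈ gridCell δ j) (F : ℝ → ℝ≥0∞) :
    ∫⁻ y in gridCell δ j, F y = ∫⁻ h in Ioo (-δ) δ, (gridCell δ j).indicator F (x + h) := by
  rw [← lintegral_indicator (measurableSet_gridCell δ j), ← lintegral_add_left_eq_self _ x,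
    setLIntegral_eq_of_support_subset]
  intro h hh
  have hxh : x + h ∈ gridCell δ j := by
    by_contra hxh
    exact hh (indicator_of_notMem hxh _)
  constructor <;> linarith [hx.1, hx.2, hxh.1, hxh.2]

theorem setLIntegral_Ico_enorm_sub_stepApprox_le (hδ : 0 < δ) (hg : Measurable g)
    (hgi : IntegrableOn g (Ici 0)) {η : ℝ≥0∞}
    (hshift : ∀ h, |h| < δ → ∫⁻ x in Ici 0, ‖(Ici 0).indicator g (x + h) - g x‖ₑ ≤ η) :
    ∫⁻ x in Ico 0 (m * δ), ‖g x - stepApprox δ m g x‖ₑ ≤ 2 * η := by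
  have hpoint : ∀ x ∈ Ico 0 (m * δ), ‖g x - stepApprox δ m g x‖ₑ ≤
      ENNReal.ofReal δ⁻¹ * ∫⁻ h in Ioo (-δ) δ, ‖(Ici 0).indicator g (x + h) - g x‖ₑ := by
    intro x hx
    obtain ⟨j, hj, hxj⟩ := exists_mem_gridCell hδ hx
    rw [stepApprox_of_mem_gridCell hj hxj]
    refine (enorm_sub_gridCell_average_le hδ (hgi.mono_set (gridCell_subset_Ici hδ.le j))).trans ?_
    rw [setLIntegral_gridCell_eq_shift hxj]
    gcongr with h
    by_cases hxh : x + h ∈ gridCell δ j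
    · rw [indicator_of_mem hxh, indicator_of_mem (gridCell_subset_Ici hδ.le j hxh)]
    · rw [indicator_of_notMem hxh]
      exact zero_le
  have hmeas : Measurable (Function.uncurry fun x h => ‖(Ici 0).indicator g (x + h) - g x‖ₑ) :=
    (((hg.indicator measurableSet_Ici).comp (measurable_fst.add measurable_snd)).sub
      (hg.comp measurable_fst)).enorm
  calc ∫⁻ x in Ico 0 (m * δ), ‖g x - stepApprox δ m g x‖ₑ
      ≤ ∫⁻ x in Ici 0, ENNReal.ofReal δ⁻¹ *
          ∫⁻ h in Ioo (-δ) δ, ‖(Ici 0).indicator g (x + h) - g x‖ₑ :=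
        (setLIntegral_mono' measurableSet_Ico hpoint).trans (lintegral_mono_set Ico_subset_Ici_self)
    _ = ENNReal.ofReal δ⁻¹ *
          ∫⁻ h in Ioo (-δ) δ, ∫⁻ x in Ici 0, ‖(Ici 0).indicator g (x + h) - g x‖ₑ := by
        rw [lintegral_const_mul' _ _ ENNReal.ofReal_ne_top,
          lintegral_lintegral_swap hmeas.aemeasurable]
    _ ≤ ENNReal.ofReal δ⁻¹ * ∫⁻ _ in Ioo (-δ) δ, η :=
        mul_le_mul_right (setLIntegral_mono' measurableSet_Ioo fun h hh =>
          hshift h (abs_lt.2 hh)) _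
    _ = 2 * η := by
        rw [setLIntegral_const, Real.volume_Ioo, mul_comm η, ← mul_assoc,
          ← ENNReal.ofReal_mul (inv_nonneg.2 hδ.le), sub_neg_eq_add, ← two_mul,
          show δ⁻¹ * (2 * δ) = 2 by field_simp, ENNReal.ofReal_ofNat]

theorem setLIntegral_enorm_sub_stepApprox_le (hδ : 0 < δ) (hg : Measurable g)
    (hgi : IntegrableOn g (Ici 0)) {η : ℝ≥0∞}
    (hshift : ∀ h, |h| < δ → ∫⁻ x in Ici 0, ‖(Ici 0).indicator g (x + h) - g x‖ₑ ≤ η) :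
    ∫⁻ x in Ici 0, ‖g x - stepApprox δ m g x‖ₑ ≤ 2 * η + ∫⁻ x in Ici (m * δ), ‖g x‖ₑ := by
  rw [← Ico_union_Ici_eq_Ici (by positivity : (0 : ℝ) ≤ m * δ)]
  refine (lintegral_union_le _ _ _).trans (add_le_add
    (setLIntegral_Ico_enorm_sub_stepApprox_le hδ hg hgi hshift) (le_of_eq ?_))
  refine setLIntegral_congr_fun measurableSet_Ici fun x hx => ?_
  rw [stepApprox_of_notMem hδ.le fun hx' => (not_lt.2 hx) hx'.2, sub_zero]

end StepApproximation

section HalfLine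

variable {K : ℝ → ℝ → ℝ} {G : ℝ → ℝ}

theorem measurable_uncurry_stepApprox (hK : Measurable (Function.uncurry K)) (δ : ℝ) (m : ℕ) :
    Measurable (Function.uncurry fun x σ => stepApprox δ m (K · σ) x) := by
  simp only [Function.uncurry_def, stepApprox]
  exact Finset.measurable_sum _ fun j _ =>
    ((measurable_const.indicator (measurableSet_gridCell δ j)).comp measurable_fst).mul
      ((hK.stronglyMeasurable.integral_prod_left.measurable.const_mul _).comp measurable_snd)

theorem isCompactOperator_integralOperator_stepApprox (hK : Measurable (Function.uncurry K))
    {C : ℝ≥0} (hC : ∀ᵐ σ ∂volume.restrict (Ici 0), ∫⁻ x in Ici 0, ‖K x σ‖ₑ ≤ C) {δ : ℝ}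
    (hδ : 0 ≤ δ) (m : ℕ) {C' : ℝ≥0}
    (hK' : AEStronglyMeasurable (Function.uncurry fun x σ => stepApprox δ m (K · σ) x)
      ((volume.restrict (Ici 0)).prod (volume.restrict (Ici 0))))
    (hC' : ∀ᵐ σ ∂volume.restrict (Ici 0), ∫⁻ x in Ici 0, ‖stepApprox δ m (K · σ) x‖ₑ ≤ C') :
    IsCompactOperator (integralOperator hK' hC') := by
  have hu (j : ℕ) : MemLp ((gridCell δ j).indicator 1) 1 (volume.restrict (Ici 0)) :=
    memLp_indicator_const 1 (measurableSet_gridCell δ j) (1 : ℝ) <| Or.inr <|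
      ((Measure.restrict_apply_le _ _).trans_lt
        (by rw [volume_gridCell]; exact ENNReal.ofReal_lt_top)).ne
  have hv (j : ℕ) : MemLp (fun σ => δ⁻¹ * ∫ y in gridCell δ j, K y σ) ∞
      (volume.restrict (Ici 0)) := by
    refine memLp_top_of_bound
      (hK.stronglyMeasurable.integral_prod_left.measurable.const_mul _).aestronglyMeasurable
      (δ⁻¹ * C) (hC.mono fun σ hσ => ?_)
    have hint : ‖∫ y in gridCell δ j, K y σ‖ₑ ≤ C :=
      (enorm_integral_le_lintegral_enorm _).trans
        ((lintegral_mono_set (gridCell_subset_Ici hδ j)).trans hσ)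
    rw [norm_mul, Real.norm_of_nonneg (inv_nonneg.2 hδ)]
    gcongr
    exact_mod_cast enorm_le_coe.1 hint
  exact isCompactOperator_of_forall_mem_span _ _
    (integralOperator_mem_span hK' hC' (Finset.range m) (fun _ _ => rfl) hu hv)

theorem setLIntegral_enorm_le_of_abs_le (hKG : ∀ x ∈ Ici (0 : ℝ), ∀ σ ∈ Ici (0 : ℝ), |K x σ| ≤ G x)
    {σ : ℝ} (hσ : σ ∈ Ici 0) {s : Set ℝ} (hs : MeasurableSet s) (hs0 : s ⊆ Ici 0) :
    ∫⁻ x in s, ‖K x σ‖ₑ ≤ ∫⁻ x in s, ‖G x‖ₑ :=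
  setLIntegral_mono' hs fun x hx =>
    enorm_le_iff_norm_le.2 ((hKG x (hs0 hx) σ hσ).trans (Real.le_norm_self _))

theorem ae_setLIntegral_enorm_le_of_abs_le (hG : IntegrableOn G (Ici 0))
    (hKG : ∀ x ∈ Ici (0 : ℝ), ∀ σ ∈ Ici (0 : ℝ), |K x σ| ≤ G x) :
    ∀ᵐ σ ∂volume.restrict (Ici 0),
      ∫⁻ x in Ici 0, ‖K x σ‖ₑ ≤ (∫⁻ x in Ici 0, ‖G x‖ₑ).toNNReal := by
  rw [ENNReal.coe_toNNReal hG.hasFiniteIntegral.ne]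
  exact ae_restrict_of_forall_mem measurableSet_Ici fun σ hσ =>
    setLIntegral_enorm_le_of_abs_le hKG hσ measurableSet_Ici subset_rfl

theorem exists_setLIntegral_Ici_enorm_le {a : ℝ} (hG : IntegrableOn G (Ici a)) {η : ℝ≥0}
    (hη : 0 < η) : ∃ R, a ≤ R ∧ ∫⁻ x in Ici R, ‖G x‖ₑ ≤ η := by
  obtain ⟨R, hR, haR⟩ := (((tendsto_integral_Ici_zero (f := fun x => ‖G x‖) tendsto_id).eventually
    (gt_mem_nhds (show (0 : ℝ) < η from hη))).and (eventually_ge_atTop a)).exists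
  refine ⟨R, haR, ?_⟩
  rw [← ofReal_integral_norm_eq_lintegral_enorm (hG.mono_set (Ici_subset_Ici.2 haR)),
    ← ENNReal.ofReal_coe_nnreal]
  exact ENNReal.ofReal_le_ofReal hR.le

theorem exists_pos_forall_lintegral_shift_le
    (hint : ∀ σ ∈ Ici (0 : ℝ), IntegrableOn (K · σ) (Ici 0))
    (hshift : TendstoUniformlyOn (fun h σ => ∫ x in Ici (0 : ℝ),
      |(Ici (0 : ℝ)).indicator (K · σ) (x + h) - K x σ|) (fun _ => 0) (𝓝 0) (Ici 0))
    {η : ℝ≥0} (hη : 0 < η) :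
    ∃ δ > 0, ∀ σ ∈ Ici (0 : ℝ), ∀ h, |h| < δ →
      ∫⁻ x in Ici 0, ‖(Ici 0).indicator (K · σ) (x + h) - K x σ‖ₑ ≤ η := by
  obtain ⟨δ, hδ, H⟩ := Metric.eventually_nhds_iff.1 (Metric.tendstoUniformlyOn_iff.1 hshift η hη)
  refine ⟨δ, hδ, fun σ hσ h hh => ?_⟩
  have hlt := H (by rwa [Real.dist_0_eq_abs]) σ hσ
  have hint' : IntegrableOn (fun x => (Ici 0).indicator (K · σ) (x + h) - K x σ) (Ici 0) :=
    (((integrable_indicator_iff measurableSet_Ici).2 (hint σ hσ)).comp_add_right h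
      |>.integrableOn).sub (hint σ hσ)
  rw [← ofReal_integral_norm_eq_lintegral_enorm hint', ← ENNReal.ofReal_coe_nnreal]
  rw [dist_zero_left, Real.norm_eq_abs] at hlt
  exact ENNReal.ofReal_le_ofReal ((le_abs_self _).trans hlt.le)

theorem isCompactOperator_integralOperator_of_dominated_of_shift
    (hK : Measurable (Function.uncurry K)) (hG : IntegrableOn G (Ici 0))
    (hKG : ∀ x ∈ Ici (0 : ℝ), ∀ σ ∈ Ici (0 : ℝ), |K x σ| ≤ G x)
    (hshift : TendstoUniformlyOn (fun h σ => ∫ x in Ici (0 : ℝ),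
      |(Ici (0 : ℝ)).indicator (K · σ) (x + h) - K x σ|) (fun _ => 0) (𝓝 0) (Ici 0))
    {C : ℝ≥0} (hC : ∀ᵐ σ ∂volume.restrict (Ici 0), ∫⁻ x in Ici 0, ‖K x σ‖ₑ ≤ C) :
    IsCompactOperator (integralOperator hK.aestronglyMeasurable hC) := by
  have hint (σ : ℝ) (hσ : σ ∈ Ici (0 : ℝ)) : IntegrableOn (K · σ) (Ici 0) :=
    hG.mono' (hK.comp measurable_prodMk_right).aestronglyMeasurable <|
      ae_restrict_of_forall_mem measurableSet_Ici fun x hx => hKG x hx σ hσ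
  refine isClosed_setOfPred_isCompactOperator.closure_subset
    (Metric.mem_closure_iff.2 fun ε hε => ?_)
  set η : ℝ≥0 := ⟨ε / 4, by positivity⟩
  have hη : 0 < η := show (0 : ℝ) < ε / 4 by positivity
  obtain ⟨δ, hδ, hδshift⟩ := exists_pos_forall_lintegral_shift_le hint hshift hη
  obtain ⟨R, hR0, hR⟩ := exists_setLIntegral_Ici_enorm_le hG hη
  set m := ⌈R / δ⌉₊
  have hRm : R ≤ m * δ := (div_le_iff₀ hδ).1 (Nat.le_ceil _)
  have hC' := hC.mono fun σ hσ => (lintegral_enorm_stepApprox_le (m := m) hδ).trans hσ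
  refine ⟨integralOperator (measurable_uncurry_stepApprox hK δ m).aestronglyMeasurable hC',
    isCompactOperator_integralOperator_stepApprox hK hC hδ.le m _ _, ?_⟩
  have hD : ∀ᵐ σ ∂volume.restrict (Ici 0),
      ∫⁻ x in Ici 0, ‖K x σ - stepApprox δ m (K · σ) x‖ₑ ≤ ↑(3 * η) := by
    refine ae_restrict_of_forall_mem measurableSet_Ici fun σ hσ => ?_
    calc ∫⁻ x in Ici 0, ‖K x σ - stepApprox δ m (K · σ) x‖ₑ
        ≤ 2 * η + ∫⁻ x in Ici (m * δ), ‖K x σ‖ₑ :=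
          setLIntegral_enorm_sub_stepApprox_le hδ (hK.comp measurable_prodMk_right) (hint σ hσ)
            (hδshift σ hσ)
      _ ≤ 2 * η + η := by
          refine add_le_add le_rfl ((setLIntegral_enorm_le_of_abs_le hKG hσ measurableSet_Ici
            (Ici_subset_Ici.2 (hR0.trans hRm))).trans ?_)
          exact (lintegral_mono_set (Ici_subset_Ici.2 hRm)).trans hR
      _ = ↑(3 * η) := by
          push_cast
          ring
  rw [dist_eq_norm]
  refine (norm_integralOperator_sub_le _ _ _ _ hD).trans_lt ?_
  change 3 * (ε / 4) < ε
  linarith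

end HalfLine

end MeasureTheory

noncomputable def nextGenKernel (N : ℝ → ℝ) (A : ℝ → ℝ → ℝ → ℝ) (x σ : ℝ) : ℝ :=
  N x * ∫ τ in Ici (0 : ℝ), A τ x σ

theorem measurable_uncurry_nextGenKernel {N : ℝ → ℝ} (hN : Measurable N) {A : ℝ → ℝ → ℝ → ℝ}
    (hA : Measurable fun p : ℝ × ℝ × ℝ => A p.1 p.2.1 p.2.2) :
    Measurable (Function.uncurry (nextGenKernel N A)) :=
  (hN.comp measurable_fst).mul
    ((hA.comp (measurable_snd.prodMk measurable_fst)).stronglyMeasurable.integral_prod_right'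
      (ν := volume.restrict (Ici 0))).measurable

theorem abs_nextGenKernel_le {N a b c : ℝ → ℝ} {A : ℝ → ℝ → ℝ → ℝ} {α M : ℝ}
    (hNnn : ∀ x, 0 ≤ N x) (hAnn : ∀ τ x σ, 0 ≤ A τ x σ) (hα : 0 ≤ α) (hann : ∀ x, 0 ≤ a x)
    (hbnn : ∀ τ, 0 ≤ b τ) (hbint : IntegrableOn b (Ici 0))
    (hA : ∀ τ ∈ Ici (0 : ℝ), ∀ x ∈ Ici (0 : ℝ), ∀ σ ∈ Ici (0 : ℝ),
      A τ x σ ≤ α * (a x * b τ * c σ))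
    (hM : ∀ σ, c σ ≤ M) {x σ : ℝ} (hx : x ∈ Ici 0) (hσ : σ ∈ Ici 0) :
    |nextGenKernel N A x σ| ≤ α * (∫ τ in Ici (0 : ℝ), b τ) * M * (a x * N x) := by
  set L := ∫ τ in Ici (0 : ℝ), b τ
  have hL : 0 ≤ L := setIntegral_nonneg measurableSet_Ici fun τ _ => hbnn τ
  have hΘ : ∫ τ in Ici (0 : ℝ), A τ x σ ≤ α * a x * c σ * L := by
    rw [← integral_const_mul]
    refine integral_mono_of_nonneg (Eventually.of_forall fun τ => hAnn τ x σ)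
      (hbint.const_mul _) (ae_restrict_of_forall_mem measurableSet_Ici fun τ hτ => ?_)
    exact (hA τ hτ x hx σ hσ).trans_eq (by ring)
  have hcoef : 0 ≤ α * a x * L * N x := by
    have := hann x; have := hNnn x; positivity
  rw [nextGenKernel, abs_of_nonneg (mul_nonneg (hNnn x) (integral_nonneg fun τ => hAnn τ x σ))]
  calc N x * ∫ τ in Ici (0 : ℝ), A τ x σ ≤ N x * (α * a x * c σ * L) :=
        mul_le_mul_of_nonneg_left hΘ (hNnn x)
    _ = α * a x * L * N x * c σ := by ring
    _ ≤ α * a x * L * N x * M := mul_le_mul_of_nonneg_left (hM σ) hcoef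
    _ = α * L * M * (a x * N x) := by ring

theorem next_generation_operator_compact_general
    (N : ℝ → ℝ) (hNmeas : Measurable N) (hNnn : ∀ x, 0 ≤ N x)
    (A : ℝ → ℝ → ℝ → ℝ)
    (hAmeas : Measurable (fun p : ℝ × ℝ × ℝ => A p.1 p.2.1 p.2.2))
    (hAnn : ∀ τ x σ, 0 ≤ A τ x σ)
    -- Assumption 1(1)
    (α : ℝ) (hα : 1 < α)
    (a b c : ℝ → ℝ)
    (hann : ∀ x, 0 ≤ a x) (hbnn : ∀ τ, 0 ≤ b τ)
    (haN : IntegrableOn (fun x => a x * N x) (Ici 0))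
    (hbint : IntegrableOn b (Ici 0))
    (hAbound : ∀ τ ∈ Ici (0:ℝ), ∀ x ∈ Ici (0:ℝ), ∀ σ ∈ Ici (0:ℝ),
      a x * b τ * c σ ≤ A τ x σ ∧ A τ x σ ≤ α * (a x * b τ * c σ))
    -- Assumption 2
    (hcbdd : ∃ M, ∀ x, c x ≤ M)
    (hΘshift : TendstoUniformlyOn
      (fun (h : ℝ) (σ : ℝ) => ∫ x in Ici (0:ℝ),
        |indicator (Ici (0:ℝ)) (fun y => N y * ∫ τ in Ici (0:ℝ), A τ y σ) (x + h)
          - N x * ∫ τ in Ici (0:ℝ), A τ x σ|)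
      (fun _ => 0) (nhds (0:ℝ)) (Ici 0)) :
    ∃ T : Lp ℝ 1 (volume.restrict (Ici (0:ℝ))) →L[ℝ] Lp ℝ 1 (volume.restrict (Ici (0:ℝ))),
      (∀ φ : Lp ℝ 1 (volume.restrict (Ici (0:ℝ))),
        ⇑(T φ) =ᵐ[volume.restrict (Ici (0:ℝ))]
          fun x => N x * ∫ σ in Ici (0:ℝ), (∫ τ in Ici (0:ℝ), A τ x σ) * φ σ) ∧
      (∀ s : Set (Lp ℝ 1 (volume.restrict (Ici (0:ℝ)))), Bornology.IsBounded s →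
        IsCompact (closure (⇑T '' s))) := by
  obtain ⟨M, hM⟩ := hcbdd
  have hK := measurable_uncurry_nextGenKernel hNmeas hAmeas
  have hG : IntegrableOn (fun x => α * (∫ τ in Ici (0 : ℝ), b τ) * M * (a x * N x)) (Ici 0) :=
    haN.const_mul _
  have hKG (x : ℝ) (hx : x ∈ Ici 0) (σ : ℝ) (hσ : σ ∈ Ici 0) :=
    abs_nextGenKernel_le hNnn hAnn (by linarith) hann hbnn hbint
      (fun τ hτ x hx σ hσ => (hAbound τ hτ x hx σ hσ).2) hM hx hσ
  have hC := ae_setLIntegral_enorm_le_of_abs_le hG hKG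
  refine ⟨integralOperator hK.aestronglyMeasurable hC, fun φ => ?_, fun s hs => ?_⟩
  · filter_upwards [integralOperator_apply hK.aestronglyMeasurable hC φ] with x hx
    rw [hx, ← integral_const_mul]
    simp_rw [nextGenKernel, mul_assoc]
  · exact (isCompactOperator_integralOperator_of_dominated_of_shift hK hG hKG hΘshift hC
      ).isCompact_closure_image_of_bounded hs

/-- for `Ω = [0,∞)`, under Assumptions 1(1) and 2, the next generation operator
`(Tφ)(x) = N(x) ∫_Ω Θ(x,σ) φ(σ) dσ`, `Θ(x,σ) = ∫_0^∞ A(τ,x,σ) dτ`, is a well-defined bounded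
linear operator on `L¹(Ω)` which is compact: the image of every bounded set has compact
closure. -/
theorem next_generation_operator_compact
    (N : ℝ → ℝ) (hNmeas : Measurable N) (hNnn : ∀ x, 0 ≤ N x)
    (hNint : IntegrableOn N (Ici 0))
    (hNpos : ∀ᵐ x ∂(volume.restrict (Ici (0:ℝ))), 0 < N x)
    (A : ℝ → ℝ → ℝ → ℝ)
    (hAmeas : Measurable (fun p : ℝ × ℝ × ℝ => A p.1 p.2.1 p.2.2))
    (hAnn : ∀ τ x σ, 0 ≤ A τ x σ)
    -- Assumption 1(1)
    (α : ℝ) (hα : 1 < α)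
    (a b c : ℝ → ℝ)
    (hameas : Measurable a) (hbmeas : Measurable b) (hcmeas : Measurable c)
    (hann : ∀ x, 0 ≤ a x) (hbnn : ∀ τ, 0 ≤ b τ) (hcnn : ∀ σ, 0 ≤ c σ)
    (haN : IntegrableOn (fun x => a x * N x) (Ici 0))
    (hbint : IntegrableOn b (Ici 0))
    (hcN : IntegrableOn (fun x => c x * N x) (Ici 0))
    (hc2N : IntegrableOn (fun x => c x ^ 2 * N x) (Ici 0))
    (hAbound : ∀ τ ∈ Ici (0:ℝ), ∀ x ∈ Ici (0:ℝ), ∀ σ ∈ Ici (0:ℝ),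
      a x * b τ * c σ ≤ A τ x σ ∧ A τ x σ ≤ α * (a x * b τ * c σ))
    -- Assumption 2
    (haNpos : ∀ f : ℝ → ℝ, Measurable f → (∀ x, 0 ≤ f x) → (∃ M, ∀ x, f x ≤ M) →
      ¬ f =ᵐ[volume.restrict (Ici (0:ℝ))] 0 →
      0 < ∫ x in Ici (0:ℝ), f x * (a x * N x))
    (hcbdd : ∃ M, ∀ x, c x ≤ M)
    (hcpos : ∀ φ : ℝ → ℝ, IntegrableOn φ (Ici 0) →
      (∀ᵐ x ∂(volume.restrict (Ici (0:ℝ))), 0 ≤ φ x) →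
      ¬ φ =ᵐ[volume.restrict (Ici (0:ℝ))] 0 →
      0 < ∫ x in Ici (0:ℝ), c x * φ x)
    (hΘshift : TendstoUniformlyOn
      (fun (h : ℝ) (σ : ℝ) => ∫ x in Ici (0:ℝ),
        |indicator (Ici (0:ℝ)) (fun y => N y * ∫ τ in Ici (0:ℝ), A τ y σ) (x + h)
          - N x * ∫ τ in Ici (0:ℝ), A τ x σ|)
      (fun _ => 0) (nhds (0:ℝ)) (Ici 0)) :
    ∃ T : Lp ℝ 1 (volume.restrict (Ici (0:ℝ))) →L[ℝ] Lp ℝ 1 (volume.restrict (Ici (0:ℝ))),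
      (∀ φ : Lp ℝ 1 (volume.restrict (Ici (0:ℝ))),
        ⇑(T φ) =ᵐ[volume.restrict (Ici (0:ℝ))]
          fun x => N x * ∫ σ in Ici (0:ℝ), (∫ τ in Ici (0:ℝ), A τ x σ) * φ σ) ∧
      (∀ s : Set (Lp ℝ 1 (volume.restrict (Ici (0:ℝ)))), Bornology.IsBounded s →
        IsCompact (closure (⇑T '' s))) :=
  next_generation_operator_compact_general N hNmeas hNnn A hAmeas hAnn α hα a b c hann hbnn haN
    hbint hAbound hcbdd hΘshift
end

section
/- Let Ω = [0,∞) and suppose Assumptions 1(1) and 2 hold. If R₀ = r(T) ≤ 1, then Ψ has no nonzero fixed point in the positive cone of Y: there is no ψ ∈ Y with ψ ≥ 0 a.e., ψ ≠ 0, and ψ(x) = ∫_Ω Θ(x,σ)N(σ)(1 − e^{−ψ(σ)}) dσ for a.e. x. -/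
/-!
Let `ψ ≥ 0` be a nonzero fixed point and split `Nψ = u + d` with `u = N (1 - e^{-ψ})` and
`d = N (ψ - 1 + e^{-ψ})`, both nonnegative and nonzero. The fixed-point equation says
`T u = Nψ =: w`. The rank-one bounds `L a(x) c(σ) ≤ Θ(x, σ) ≤ α L a(x) c(σ)` give
`ψ ≤ α L (∫ c u) a` and `T d ≥ N L (∫ c d) a`, hence `T w = w + T d ≥ (1 + ε) w` with
`ε = ∫ c d / (α ∫ c u) > 0`.

For a positive operator on an ordered Banach space such a `w` forces `r(T) ≥ 1 + ε`. Otherwise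
every real `s ≥ s₀`, for some `s₀ ∈ (r(T), 1 + ε)`, lies in the resolvent set. The resolvent
`(s - T)⁻¹` is then positive on `[s₀, ∞)`: this holds for `s > ‖T‖` by the Neumann series and
propagates downwards by continuity, since `(s' - T)⁻¹ = (1 - (s - s') (s - T)⁻¹)⁻¹ (s - T)⁻¹`.
Applying it to `(s₀ - T) w ≤ (s₀ - 1 - ε) w` gives `w ≤ (s₀ - 1 - ε) (s₀ - T)⁻¹ w ≤ 0`. Since
`spectralRadius ℝ T` only sees the real spectrum, Gelfand's formula is of no use here.
-/

open MeasureTheory Set Filter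
open scoped ENNReal

section PositiveOperators

variable {E : Type*} [NormedAddCommGroup E] [NormedSpace ℝ E] [PartialOrder E]
  [OrderClosedTopology E]

lemma isClosed_setOf_monotone_continuousLinearMap : IsClosed {Y : E →L[ℝ] E | Monotone Y} := by
  simp only [Monotone, ofPred_forall]
  exact isClosed_iInter fun x ↦ isClosed_iInter fun y ↦ isClosed_iInter fun _ ↦
    isClosed_le (continuous_eval_const x) (continuous_eval_const y)

variable [CompleteSpace E] [IsOrderedAddMonoid E]

lemma monotone_inverse_one_sub {Y : E →L[ℝ] E} (hY : Monotone Y) (hY1 : ‖Y‖ < 1) :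
    Monotone ⇑(Ring.inverse (1 - Y)) := by
  have hsum : Summable fun n : ℕ ↦ Y ^ n := summable_geometric_of_norm_lt_one hY1
  have happ (x : E) : Summable fun n : ℕ ↦ (Y ^ n) x :=
    (ContinuousLinearMap.apply ℝ E x).summable hsum
  rw [NormedRing.inverse_one_sub Y hY1]
  intro x y hxy
  change (∑' n, Y ^ n) x ≤ (∑' n, Y ^ n) y
  rw [← ContinuousLinearMap.apply_apply x, ← ContinuousLinearMap.apply_apply y,
    ContinuousLinearMap.map_tsum _ hsum, ContinuousLinearMap.map_tsum _ hsum]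
  refine Summable.tsum_le_tsum (fun n ↦ ?_) (happ x) (happ y)
  simp only [ContinuousLinearMap.apply_apply, FunLike.coe_pow_eq_iterate]
  exact hY.iterate n hxy

lemma monotone_inverse_mul_one_sub {G X : E →L[ℝ] E} (hG : Monotone ⇑(Ring.inverse G))
    (hX : Monotone X) (hX1 : ‖X‖ < 1) : Monotone ⇑(Ring.inverse (G * (1 - X))) := by
  have hunit : IsUnit (1 - X) := Units.val_oneSub X hX1 ▸ (Units.oneSub X hX1).isUnit
  rw [Ring.inverse_mul (Or.inr hunit)]
  exact (monotone_inverse_one_sub hX hX1).comp hG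

variable [PosSMulMono ℝ E] {T : E →L[ℝ] E}

lemma monotone_resolvent_of_norm_lt (hT : Monotone T) {t : ℝ} (ht : ‖T‖ < t) :
    Monotone ⇑(resolvent T t) := by
  have ht0 : 0 < t := (norm_nonneg T).trans_lt ht
  have hsmall : ‖t⁻¹ • T‖ < 1 := by
    rw [norm_smul, Real.norm_of_nonneg (inv_nonneg.2 ht0.le), inv_mul_lt_iff₀ ht0, mul_one]
    exact ht
  have h := spectrum.units_smul_resolvent_self (r := Units.mk0 t ht0.ne') (a := T)
  simp only [Units.smul_def, Units.val_inv_eq_inv_val, Units.val_mk0, resolvent, map_one] at h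
  rw [← inv_smul_smul₀ ht0.ne' (resolvent T t), resolvent, h]
  exact (monotone_inverse_one_sub (hT.const_smul (inv_nonneg.2 ht0.le)) hsmall).const_smul
    (inv_nonneg.2 ht0.le)

lemma monotone_resolvent_of_le {s t : ℝ} (ht : t ∈ resolventSet ℝ T)
    (hRt : Monotone ⇑(resolvent T t)) (hst : s ≤ t) (hsmall : (t - s) * ‖resolvent T t‖ < 1) :
    Monotone ⇑(resolvent T s) := by
  have hfac : algebraMap ℝ (E →L[ℝ] E) s - T
      = (algebraMap ℝ (E →L[ℝ] E) t - T) * (1 - (t - s) • resolvent T t) := by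
    rw [mul_sub, mul_one, mul_smul_comm, resolvent, Ring.mul_inverse_cancel _ ht,
      Algebra.algebraMap_eq_smul_one, Algebra.algebraMap_eq_smul_one, sub_smul]
    abel
  have hX1 : ‖(t - s) • resolvent T t‖ < 1 := by
    rwa [norm_smul, Real.norm_of_nonneg (sub_nonneg.2 hst)]
  rw [resolvent, hfac]
  exact monotone_inverse_mul_one_sub hRt (hRt.const_smul (sub_nonneg.2 hst)) hX1

lemma monotone_resolvent (hT : Monotone T) {s : ℝ} (hs : Ici s ⊆ resolventSet ℝ T) :
    Monotone ⇑(resolvent T s) := by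
  set b := max s (‖T‖ + 1)
  have hcont : ContinuousOn (resolvent T) (Icc s b) := fun t ht ↦
    (spectrum.hasDerivAt_resolvent_const_left (hs ht.1)).continuousAt.continuousWithinAt
  have hclosed : IsClosed ({t | Monotone ⇑(resolvent T t)} ∩ Icc s b) := by
    rw [inter_comm]
    exact hcont.preimage_isClosed_of_isClosed isClosed_Icc
      isClosed_setOf_monotone_continuousLinearMap
  refine hclosed.mem_of_ge_of_forall_exists_lt
    (monotone_resolvent_of_norm_lt hT (by linarith [le_max_right s (‖T‖ + 1)])) (le_max_left _ _)
    fun t ⟨hRt, hst, _⟩ ↦ ?_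
  set δ := (‖resolvent T t‖ + 1)⁻¹
  have hδ : 0 < δ := by positivity
  set t' := max s (t - δ)
  have ht't : t' < t := max_lt hst (by linarith)
  refine ⟨t', monotone_resolvent_of_le (hs hst.le) hRt ht't.le ?_, le_max_left _ _, ht't⟩
  calc (t - t') * ‖resolvent T t‖ ≤ δ * ‖resolvent T t‖ := by
        gcongr; linarith [le_max_right s (t - δ)]
    _ < 1 := by
        rw [inv_mul_lt_one₀ (by positivity)]; linarith

theorem ofReal_le_spectralRadius_of_smul_le_apply (hT : Monotone T) {w : E} (hw0 : 0 ≤ w)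
    (hw : w ≠ 0) {r : ℝ} (hr : r • w ≤ T w) : ENNReal.ofReal r ≤ spectralRadius ℝ T := by
  by_contra! h
  obtain ⟨s, hs0, hTs, hsr⟩ := ENNReal.lt_iff_exists_real_btwn.1 h
  have hsr : s < r := (ENNReal.ofReal_lt_ofReal_iff'.1 hsr).1
  have hres : Ici s ⊆ resolventSet ℝ T := fun t (ht : s ≤ t) ↦
    spectrum.mem_resolventSet_of_spectralRadius_lt <| hTs.trans_le <| by
      rw [← enorm_eq_nnnorm, ← ofReal_norm, Real.norm_of_nonneg (hs0.trans ht)]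
      exact ENNReal.ofReal_le_ofReal ht
  have hR := monotone_resolvent hT hres
  have hRw : resolvent T s ((algebraMap ℝ (E →L[ℝ] E) s - T) w) = w := by
    rw [resolvent, ← mul_apply_eq_comp, Ring.inverse_mul_cancel _ (hres self_mem_Ici),
      one_apply_eq_self]
  have hle : w ≤ (s - r) • resolvent T s w := by
    calc w = resolvent T s ((algebraMap ℝ (E →L[ℝ] E) s - T) w) := hRw.symm
      _ ≤ resolvent T s ((s - r) • w) := hR <| by
          simp only [sub_apply, Algebra.algebraMap_eq_smul_one, smul_apply, one_apply_eq_self,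
            sub_smul]
          exact sub_le_sub_left hr _
      _ = (s - r) • resolvent T s w := map_smul _ _ _
  have hnonpos : (s - r) • resolvent T s w ≤ 0 := by
    rw [← neg_sub, neg_smul, neg_nonpos]
    exact smul_nonneg (sub_nonneg.2 hsr.le) (map_zero (resolvent T s) ▸ hR hw0)
  exact hw (le_antisymm (hle.trans hnonpos) hw0)

end PositiveOperators

instance MeasureTheory.Lp.instPosSMulMono {X E : Type*} [MeasurableSpace X] {μ : Measure X}
    {p : ℝ≥0∞} [NormedAddCommGroup E] [NormedSpace ℝ E] [PartialOrder E] [PosSMulMono ℝ E] :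
    PosSMulMono ℝ (Lp E p μ) where
  smul_le_smul_of_nonneg_left c hc f g hfg := by
    rw [← Lp.coeFn_le] at hfg ⊢
    filter_upwards [hfg, Lp.coeFn_smul c f, Lp.coeFn_smul c g] with x hx hf hg
    rw [hf, hg]
    exact smul_le_smul_of_nonneg_left hx hc

section Kernel

variable {X : Type*} [MeasurableSpace X] {μ : Measure X}

lemma AEMeasurable.of_mul_right {f g : X → ℝ} (hfg : AEMeasurable (fun x ↦ f x * g x) μ)
    (hg : AEMeasurable g μ) (hg0 : ∀ᵐ x ∂μ, g x ≠ 0) : AEMeasurable f μ :=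
  (hfg.mul hg.inv).congr <| hg0.mono fun x hx ↦ mul_inv_cancel_right₀ hx (f x)

lemma integral_bounds_of_sandwich {f g : X → ℝ} {k K : ℝ} (hg : Integrable g μ)
    (hf : AEStronglyMeasurable f μ) (hf0 : 0 ≤ᵐ[μ] f)
    (h : ∀ᵐ x ∂μ, k * g x ≤ f x ∧ f x ≤ K * g x) :
    k * ∫ x, g x ∂μ ≤ ∫ x, f x ∂μ ∧ ∫ x, f x ∂μ ≤ K * ∫ x, g x ∂μ := by
  have hfi : Integrable f μ := (hg.const_mul K).mono' hf <| by
    filter_upwards [hf0, h] with x h0 hx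
    rw [Real.norm_of_nonneg h0]
    exact hx.2
  rw [← integral_const_mul, ← integral_const_mul]
  exact ⟨integral_mono_ae (hg.const_mul k) hfi (h.mono fun _ hx ↦ hx.1),
    integral_mono_ae hfi (hg.const_mul K) (h.mono fun _ hx ↦ hx.2)⟩

variable {a c : X → ℝ} {α : ℝ}

lemma ae_ae_integral_bounds_of_sandwich {Y : Type*} [MeasurableSpace Y] {ν : Measure Y}
    {A : Y → X → X → ℝ} {b : Y → ℝ} (hb : Integrable b ν)
    (hA : ∀ x σ, AEStronglyMeasurable (A · x σ) ν) (hA0 : ∀ τ x σ, 0 ≤ A τ x σ)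
    (hAb : ∀ᵐ x ∂μ, ∀ᵐ σ ∂μ, ∀ᵐ τ ∂ν,
      a x * b τ * c σ ≤ A τ x σ ∧ A τ x σ ≤ α * (a x * b τ * c σ)) :
    ∀ᵐ x ∂μ, ∀ᵐ σ ∂μ, (∫ τ, b τ ∂ν) * a x * c σ ≤ ∫ τ, A τ x σ ∂ν ∧
      ∫ τ, A τ x σ ∂ν ≤ α * (∫ τ, b τ ∂ν) * a x * c σ := by
  filter_upwards [hAb] with x hx
  filter_upwards [hx] with σ hσ
  have h := integral_bounds_of_sandwich (k := a x * c σ) (K := α * (a x * c σ)) hb (hA x σ)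
    (ae_of_all _ fun τ ↦ hA0 τ x σ) (hσ.mono fun τ hτ ↦ by constructor <;> linarith [hτ.1, hτ.2])
  constructor <;> linarith [h.1, h.2]

variable {Θ : X → X → ℝ} {m : ℝ}

lemma ae_kernel_integral_bounds (hΘm : ∀ x, AEStronglyMeasurable (Θ x) μ)
    (hΘ0 : ∀ x σ, 0 ≤ Θ x σ)
    (hΘ : ∀ᵐ x ∂μ, ∀ᵐ σ ∂μ, m * a x * c σ ≤ Θ x σ ∧ Θ x σ ≤ α * m * a x * c σ)
    {f : X → ℝ} (hf : AEStronglyMeasurable f μ) (hf0 : 0 ≤ᵐ[μ] f)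
    (hcf : Integrable (fun σ ↦ c σ * f σ) μ) :
    ∀ᵐ x ∂μ, m * a x * ∫ σ, c σ * f σ ∂μ ≤ ∫ σ, Θ x σ * f σ ∂μ ∧
      ∫ σ, Θ x σ * f σ ∂μ ≤ α * m * a x * ∫ σ, c σ * f σ ∂μ := by
  filter_upwards [hΘ] with x hx
  refine integral_bounds_of_sandwich hcf ((hΘm x).mul hf)
    (hf0.mono fun σ h ↦ mul_nonneg (hΘ0 x σ) h) ?_
  filter_upwards [hx, hf0] with σ hσ h0
  simp only [← mul_assoc]
  exact ⟨mul_le_mul_of_nonneg_right hσ.1 h0, mul_le_mul_of_nonneg_right hσ.2 h0⟩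

def IsKernelOperator (T : Lp ℝ 1 μ →L[ℝ] Lp ℝ 1 μ) (N : X → ℝ) (Θ : X → X → ℝ) : Prop :=
  ∀ φ : Lp ℝ 1 μ, ⇑(T φ) =ᵐ[μ] fun x ↦ N x * ∫ σ, Θ x σ * φ σ ∂μ

variable {N : X → ℝ} {T : Lp ℝ 1 μ →L[ℝ] Lp ℝ 1 μ}

lemma coeFn_kernelOperator_toL1
    (hT : IsKernelOperator T N Θ)
    {f : X → ℝ} (hf : Integrable f μ) :
    ⇑(T (hf.toL1 f)) =ᵐ[μ] fun x ↦ N x * ∫ σ, Θ x σ * f σ ∂μ := by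
  filter_upwards [hT (hf.toL1 f)] with x hx
  rw [hx, integral_congr_ae (hf.coeFn_toL1.mono fun σ hσ ↦ by rw [hσ])]

lemma monotone_kernelOperator
    (hT : IsKernelOperator T N Θ)
    (hN : 0 ≤ᵐ[μ] N) (hΘ0 : ∀ x σ, 0 ≤ Θ x σ) : Monotone T := by
  refine (monotone_iff_map_nonneg T).2 fun φ hφ ↦ ?_
  rw [← Lp.coeFn_nonneg] at hφ ⊢
  filter_upwards [hT φ, hN] with x hx hNx
  rw [hx]
  exact mul_nonneg hNx (integral_nonneg_of_ae (hφ.mono fun σ h ↦ mul_nonneg (hΘ0 x σ) h))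

lemma smul_le_kernelOperator_toL1_add {ψ u d : X → ℝ} (hu : Integrable u μ) (hd : Integrable d μ)
    (hT : IsKernelOperator T N Θ)
    (hN : 0 ≤ᵐ[μ] N) {ε : ℝ}
    (hsum : ∀ᵐ x ∂μ, u x + d x = N x * ψ x)
    (hfix : ∀ᵐ x ∂μ, ψ x = ∫ σ, Θ x σ * u σ ∂μ)
    (hgain : ∀ᵐ x ∂μ, ε * ψ x ≤ ∫ σ, Θ x σ * d σ ∂μ) :
    (1 + ε) • (hu.toL1 u + hd.toL1 d) ≤ T (hu.toL1 u + hd.toL1 d) := by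
  rw [← Lp.coeFn_le, map_add]
  filter_upwards [Lp.coeFn_smul (1 + ε) (hu.toL1 u + hd.toL1 d),
    Lp.coeFn_add (hu.toL1 u) (hd.toL1 d), Lp.coeFn_add (T (hu.toL1 u)) (T (hd.toL1 d)),
    hu.coeFn_toL1, hd.coeFn_toL1, coeFn_kernelOperator_toL1 hT hu, coeFn_kernelOperator_toL1 hT hd,
    hsum, hfix, hgain, hN] with x hs ha hTa hux hdx hTu hTd hsx hfx hgx hNx
  simp only [hs, ha, hTa, Pi.add_apply, Pi.smul_apply, hux, hdx, hTu, hTd, smul_eq_mul, hsx,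
    ← hfx]
  nlinarith [mul_le_mul_of_nonneg_left hgx hNx]

theorem exists_smul_le_kernelOperator_of_decomposition
    (hT : IsKernelOperator T N Θ) (hN0 : 0 ≤ᵐ[μ] N)
    (hΘm : ∀ x, AEStronglyMeasurable (Θ x) μ) (hΘ0 : ∀ x σ, 0 ≤ Θ x σ)
    (hΘ : ∀ᵐ x ∂μ, ∀ᵐ σ ∂μ, m * a x * c σ ≤ Θ x σ ∧ Θ x σ ≤ α * m * a x * c σ) (hα : 0 < α)
    (hc : AEStronglyMeasurable c μ) (hc0 : ∀ x, 0 ≤ c x) (hcM : ∃ M, ∀ x, c x ≤ M)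
    (hcpos : ∀ φ : X → ℝ, Integrable φ μ → 0 ≤ᵐ[μ] φ → ¬ φ =ᵐ[μ] 0 →
      0 < ∫ x, c x * φ x ∂μ)
    {ψ u d : X → ℝ} (hu : Integrable u μ) (hd : Integrable d μ) (hu0 : 0 ≤ᵐ[μ] u)
    (hd0 : 0 ≤ᵐ[μ] d) (hu_ne : ¬ u =ᵐ[μ] 0) (hd_ne : ¬ d =ᵐ[μ] 0)
    (hsum : ∀ᵐ x ∂μ, u x + d x = N x * ψ x) (hfix : ∀ᵐ x ∂μ, ψ x = ∫ σ, Θ x σ * u σ ∂μ) :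
    ∃ w : Lp ℝ 1 μ, 0 ≤ w ∧ w ≠ 0 ∧ ∃ ε : ℝ, 0 < ε ∧ (1 + ε) • w ≤ T w := by
  obtain ⟨M, hM⟩ := hcM
  have hcM : ∀ᵐ x ∂μ, ‖c x‖ ≤ M :=
    ae_of_all _ fun x ↦ (Real.norm_of_nonneg (hc0 x)).trans_le (hM x)
  have hβ := hcpos u hu hu0 hu_ne
  have hδ := hcpos d hd hd0 hd_ne
  have hKu := ae_kernel_integral_bounds hΘm hΘ0 hΘ hu.aestronglyMeasurable hu0 (hu.bdd_mul hc hcM)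
  have hKd := ae_kernel_integral_bounds hΘm hΘ0 hΘ hd.aestronglyMeasurable hd0 (hd.bdd_mul hc hcM)
  set β := ∫ σ, c σ * u σ ∂μ
  set δ := ∫ σ, c σ * d σ ∂μ
  have hL1 {f : X → ℝ} (hf : Integrable f μ) (hf0 : 0 ≤ᵐ[μ] f) : 0 ≤ hf.toL1 f :=
    (Lp.coeFn_nonneg _).1 (hf0.trans hf.coeFn_toL1.symm.le)
  refine ⟨hu.toL1 u + hd.toL1 d, add_nonneg (hL1 hu hu0) (hL1 hd hd0), fun h ↦ hd_ne ?_,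
    δ / (α * β), by positivity, smul_le_kernelOperator_toL1_add hu hd hT hN0 hsum hfix ?_⟩
  · have hd_zero : hd.toL1 d = 0 :=
      ((add_eq_zero_iff_of_nonneg (hL1 hu hu0) (hL1 hd hd0)).1 h).2
    exact hd.coeFn_toL1.symm.trans (hd_zero ▸ Lp.coeFn_zero _ _ _)
  filter_upwards [hfix, hKu, hKd] with x hx hKux hKdx
  calc δ / (α * β) * ψ x ≤ δ / (α * β) * (α * m * a x * β) := by
        gcongr; exact hx.trans_le hKux.2
    _ = m * a x * δ := by field_simp
    _ ≤ ∫ σ, Θ x σ * d σ ∂μ := hKdx.1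

theorem exists_smul_le_kernelOperator_of_fixedPoint
    (hT : IsKernelOperator T N Θ)
    (hN : AEMeasurable N μ) (hNint : Integrable N μ) (hNpos : ∀ᵐ x ∂μ, 0 < N x)
    (hΘm : ∀ x, AEStronglyMeasurable (Θ x) μ) (hΘ0 : ∀ x σ, 0 ≤ Θ x σ)
    (hΘ : ∀ᵐ x ∂μ, ∀ᵐ σ ∂μ, m * a x * c σ ≤ Θ x σ ∧ Θ x σ ≤ α * m * a x * c σ) (hα : 0 < α)
    (hc : AEStronglyMeasurable c μ) (hc0 : ∀ x, 0 ≤ c x) (hcM : ∃ M, ∀ x, c x ≤ M)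
    (hcpos : ∀ φ : X → ℝ, Integrable φ μ → 0 ≤ᵐ[μ] φ → ¬ φ =ᵐ[μ] 0 →
      0 < ∫ x, c x * φ x ∂μ)
    {ψ : X → ℝ} (hψ : AEMeasurable ψ μ) (hψN : Integrable (fun x ↦ ψ x * N x) μ)
    (hψ0 : 0 ≤ᵐ[μ] ψ) (hψne : ¬ ψ =ᵐ[μ] 0)
    (hfix : ∀ᵐ x ∂μ, ψ x = ∫ σ, Θ x σ * N σ * (1 - Real.exp (-ψ σ)) ∂μ) :
    ∃ w : Lp ℝ 1 μ, 0 ≤ w ∧ w ≠ 0 ∧ ∃ ε : ℝ, 0 < ε ∧ (1 + ε) • w ≤ T w := by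
  have hN0 : 0 ≤ᵐ[μ] N := hNpos.mono fun _ hx ↦ hx.le
  set u : X → ℝ := fun x ↦ N x * (1 - Real.exp (-ψ x))
  set d : X → ℝ := fun x ↦ N x * ψ x - u x
  have hu0 : 0 ≤ᵐ[μ] u := by
    filter_upwards [hN0, hψ0] with x hNx hψx
    exact mul_nonneg hNx (sub_nonneg.2 (Real.exp_le_one_iff.2 (neg_nonpos.2 hψx)))
  have hd0 : 0 ≤ᵐ[μ] d := by
    filter_upwards [hN0] with x hNx
    exact sub_nonneg.2 (mul_le_mul_of_nonneg_left (by linarith [Real.add_one_le_exp (-ψ x)]) hNx)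
  have hu : Integrable u μ := by
    refine hNint.mono' (hN.mul (aemeasurable_const.sub hψ.neg.exp)).aestronglyMeasurable ?_
    filter_upwards [hu0, hN0] with x hux hNx
    rw [Real.norm_of_nonneg hux]
    exact mul_le_of_le_one_right hNx (by linarith [Real.exp_pos (-ψ x)])
  have hd : Integrable d μ := (hψN.congr (ae_of_all _ fun x ↦ mul_comm (ψ x) (N x))).sub hu
  have hu_ne : ¬ u =ᵐ[μ] 0 := fun h ↦ hψne <| by
    filter_upwards [h, hNpos] with x hx hNx
    simpa [u, hNx.ne', sub_eq_zero, eq_comm (a := (1 : ℝ))] using hx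
  have hd_ne : ¬ d =ᵐ[μ] 0 := fun h ↦ hψne <| by
    filter_upwards [h, hNpos] with x hx hNx
    by_contra hψx
    have : N x * (1 - Real.exp (-ψ x)) < N x * ψ x := by
      gcongr; linarith [Real.add_one_lt_exp (neg_ne_zero.2 hψx)]
    simp only [d, u, Pi.zero_apply] at hx
    linarith
  refine exists_smul_le_kernelOperator_of_decomposition hT hN0 hΘm hΘ0 hΘ hα hc hc0 hcM hcpos
    hu hd hu0 hd0 hu_ne hd_ne (ψ := ψ) (ae_of_all _ fun x ↦ by simp [d]) ?_
  filter_upwards [hfix] with x hx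
  simp_rw [hx, u, mul_assoc]

end Kernel

theorem no_positive_fixed_point_of_R0_le_one_general
    (N : ℝ → ℝ) (hNmeas : Measurable N)
    (hNint : IntegrableOn N (Ici 0))
    (hNpos : ∀ᵐ x ∂(volume.restrict (Ici (0:ℝ))), 0 < N x)
    (A : ℝ → ℝ → ℝ → ℝ)
    (hAmeas : Measurable (fun p : ℝ × ℝ × ℝ => A p.1 p.2.1 p.2.2))
    (hAnn : ∀ τ x σ, 0 ≤ A τ x σ)
    -- Assumption 1(1)
    (α : ℝ) (hα : 1 < α)
    (a b c : ℝ → ℝ)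
    (hcmeas : Measurable c)
    (hcnn : ∀ σ, 0 ≤ c σ)
    (hbint : IntegrableOn b (Ici 0))
    (hAbound : ∀ τ ∈ Ici (0:ℝ), ∀ x ∈ Ici (0:ℝ), ∀ σ ∈ Ici (0:ℝ),
      a x * b τ * c σ ≤ A τ x σ ∧ A τ x σ ≤ α * (a x * b τ * c σ))
    -- Assumption 2
    (hcbdd : ∃ M, ∀ x, c x ≤ M)
    (hcpos : ∀ φ : ℝ → ℝ, IntegrableOn φ (Ici 0) →
      (∀ᵐ x ∂(volume.restrict (Ici (0:ℝ))), 0 ≤ φ x) →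
      ¬ φ =ᵐ[volume.restrict (Ici (0:ℝ))] 0 →
      0 < ∫ x in Ici (0:ℝ), c x * φ x)
    -- the next generation operator and R₀ ≤ 1
    (T : Lp ℝ 1 (volume.restrict (Ici (0:ℝ))) →L[ℝ] Lp ℝ 1 (volume.restrict (Ici (0:ℝ))))
    (hT : ∀ φ : Lp ℝ 1 (volume.restrict (Ici (0:ℝ))),
      ⇑(T φ) =ᵐ[volume.restrict (Ici (0:ℝ))]
        fun x => N x * ∫ σ in Ici (0:ℝ), (∫ τ in Ici (0:ℝ), A τ x σ) * φ σ)
    (hR0 : spectralRadius ℝ T ≤ 1) :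
    ¬ ∃ ψ : ℝ → ℝ,
      IntegrableOn (fun x => ψ x * N x) (Ici 0) ∧
      (∀ᵐ x ∂(volume.restrict (Ici (0:ℝ))), 0 ≤ ψ x) ∧
      ¬ ψ =ᵐ[volume.restrict (Ici (0:ℝ))] 0 ∧
      (∀ᵐ x ∂(volume.restrict (Ici (0:ℝ))),
        ψ x = ∫ σ in Ici (0:ℝ),
          (∫ τ in Ici (0:ℝ), A τ x σ) * N σ * (1 - Real.exp (-ψ σ))) := by
  rintro ⟨ψ, hψN, hψ0, hψne, hfix⟩
  have hmem : ∀ᵐ x ∂(volume.restrict (Ici (0:ℝ))), x ∈ Ici (0:ℝ) :=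
    ae_restrict_mem measurableSet_Ici
  have hΘ0 (x σ : ℝ) : 0 ≤ ∫ τ in Ici (0:ℝ), A τ x σ := integral_nonneg fun τ ↦ hAnn τ x σ
  have hΘm (x : ℝ) : AEStronglyMeasurable (fun σ ↦ ∫ τ in Ici (0:ℝ), A τ x σ)
      (volume.restrict (Ici (0:ℝ))) :=
    (StronglyMeasurable.integral_prod_right' (f := fun p : ℝ × ℝ ↦ A p.2 x p.1)
      (hAmeas.comp (f := fun p : ℝ × ℝ ↦ (p.2, x, p.1)) (by fun_prop)).stronglyMeasurable
      ).aestronglyMeasurable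
  have hΘ := ae_ae_integral_bounds_of_sandwich (μ := volume.restrict (Ici (0:ℝ))) (A := A) hbint
    (fun x σ ↦ (hAmeas.comp (f := fun τ ↦ (τ, x, σ)) (by fun_prop)).aestronglyMeasurable)
    hAnn <| by
      filter_upwards [hmem] with x hx
      filter_upwards [hmem] with σ hσ
      filter_upwards [hmem] with τ hτ
      exact hAbound τ hτ x hx σ hσ
  have hψ := hψN.aemeasurable.of_mul_right hNmeas.aemeasurable (hNpos.mono fun _ h ↦ h.ne')
  obtain ⟨w, hw0, hw, ε, hε, hTw⟩ := exists_smul_le_kernelOperator_of_fixedPoint hT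
    hNmeas.aemeasurable hNint hNpos hΘm hΘ0 hΘ (by linarith) hcmeas.aestronglyMeasurable hcnn
    hcbdd hcpos hψ hψN hψ0 hψne hfix
  have hR := ofReal_le_spectralRadius_of_smul_le_apply
    (monotone_kernelOperator hT (hNpos.mono fun _ h ↦ h.le) hΘ0) hw0 hw hTw
  have := ENNReal.ofReal_le_one.1 (hR.trans hR0)
  linarith

/-- for `Ω = [0,∞)`, under Assumptions 1(1) and 2, if `R₀ = r(T) ≤ 1` then the
final size operator `Ψ` has no nonzero nonnegative fixed point in `Y`. -/
theorem no_positive_fixed_point_of_R0_le_one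
    (N : ℝ → ℝ) (hNmeas : Measurable N) (hNnn : ∀ x, 0 ≤ N x)
    (hNint : IntegrableOn N (Ici 0))
    (hNpos : ∀ᵐ x ∂(volume.restrict (Ici (0:ℝ))), 0 < N x)
    (A : ℝ → ℝ → ℝ → ℝ)
    (hAmeas : Measurable (fun p : ℝ × ℝ × ℝ => A p.1 p.2.1 p.2.2))
    (hAnn : ∀ τ x σ, 0 ≤ A τ x σ)
    -- Assumption 1(1)
    (α : ℝ) (hα : 1 < α)
    (a b c : ℝ → ℝ)
    (hameas : Measurable a) (hbmeas : Measurable b) (hcmeas : Measurable c)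
    (hann : ∀ x, 0 ≤ a x) (hbnn : ∀ τ, 0 ≤ b τ) (hcnn : ∀ σ, 0 ≤ c σ)
    (haN : IntegrableOn (fun x => a x * N x) (Ici 0))
    (hbint : IntegrableOn b (Ici 0))
    (hcN : IntegrableOn (fun x => c x * N x) (Ici 0))
    (hc2N : IntegrableOn (fun x => c x ^ 2 * N x) (Ici 0))
    (hAbound : ∀ τ ∈ Ici (0:ℝ), ∀ x ∈ Ici (0:ℝ), ∀ σ ∈ Ici (0:ℝ),
      a x * b τ * c σ ≤ A τ x σ ∧ A τ x σ ≤ α * (a x * b τ * c σ))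
    -- Assumption 2
    (haNpos : ∀ f : ℝ → ℝ, Measurable f → (∀ x, 0 ≤ f x) → (∃ M, ∀ x, f x ≤ M) →
      ¬ f =ᵐ[volume.restrict (Ici (0:ℝ))] 0 →
      0 < ∫ x in Ici (0:ℝ), f x * (a x * N x))
    (hcbdd : ∃ M, ∀ x, c x ≤ M)
    (hcpos : ∀ φ : ℝ → ℝ, IntegrableOn φ (Ici 0) →
      (∀ᵐ x ∂(volume.restrict (Ici (0:ℝ))), 0 ≤ φ x) →
      ¬ φ =ᵐ[volume.restrict (Ici (0:ℝ))] 0 →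
      0 < ∫ x in Ici (0:ℝ), c x * φ x)
    (hΘshift : TendstoUniformlyOn
      (fun (h : ℝ) (σ : ℝ) => ∫ x in Ici (0:ℝ),
        |indicator (Ici (0:ℝ)) (fun y => N y * ∫ τ in Ici (0:ℝ), A τ y σ) (x + h)
          - N x * ∫ τ in Ici (0:ℝ), A τ x σ|)
      (fun _ => 0) (nhds (0:ℝ)) (Ici 0))
    -- the next generation operator and R₀ ≤ 1
    (T : Lp ℝ 1 (volume.restrict (Ici (0:ℝ))) →L[ℝ] Lp ℝ 1 (volume.restrict (Ici (0:ℝ))))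
    (hT : ∀ φ : Lp ℝ 1 (volume.restrict (Ici (0:ℝ))),
      ⇑(T φ) =ᵐ[volume.restrict (Ici (0:ℝ))]
        fun x => N x * ∫ σ in Ici (0:ℝ), (∫ τ in Ici (0:ℝ), A τ x σ) * φ σ)
    (hR0 : spectralRadius ℝ T ≤ 1) :
    ¬ ∃ ψ : ℝ → ℝ,
      IntegrableOn (fun x => ψ x * N x) (Ici 0) ∧
      (∀ᵐ x ∂(volume.restrict (Ici (0:ℝ))), 0 ≤ ψ x) ∧
      ¬ ψ =ᵐ[volume.restrict (Ici (0:ℝ))] 0 ∧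
      (∀ᵐ x ∂(volume.restrict (Ici (0:ℝ))),
        ψ x = ∫ σ in Ici (0:ℝ),
          (∫ τ in Ici (0:ℝ), A τ x σ) * N σ * (1 - Real.exp (-ψ σ))) :=
  no_positive_fixed_point_of_R0_le_one_general N hNmeas hNint hNpos A hAmeas hAnn α hα a b c hcmeas
    hcnn hbint hAbound hcbdd hcpos T hT hR0
end

section
/- Let Ω = [0,∞) and suppose Assumptions 1(1) and 2 hold. Then the nonlinear operator Φ maps the positive cone L¹₊(Ω) into the bounded set {φ ∈ L¹₊(Ω) : ‖φ‖₁ ≤ α L (∫_Ω a N dx)(∫_Ω c N dx)}, and the image Φ(L¹₊(Ω)) has compact closure in L¹(Ω). -/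
open MeasureTheory Set Filter Topology
open scoped ENNReal

/-!
With `u = 1 - e^{-φ/N}`, which takes values in `[0,1]` when `φ ≥ 0`, `Φφ` is the integral
operator with kernel `K(x,σ) = N(x) Θ(x,σ) N(σ)` applied to `u`, and Assumption 1(1) dominates `K`
by the integrable rank-one kernel `α L (aN)(x) (cN)(σ)`. This gives the `L¹` bound at once. For
compactness, sequential Banach–Alaoglu in the dual of the separable space `L¹` extracts from any
sequence `u_n` a weak-* convergent subsequence; since every `K(x,·)` is integrable, `Φφ_n`
then converges pointwise, hence in `L¹` by dominated convergence.
-/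

/-- The nonlinear operator `(Φφ)(x) = N(x) ∫_Ω Θ(x,σ) N(σ)(1 - e^{-φ(σ)/N(σ)}) dσ` on
`Ω = [0,∞)`, with `Θ(x,σ) = ∫_0^∞ A(τ,x,σ) dτ`. -/
noncomputable def PhiOpHalfLine (A : ℝ → ℝ → ℝ → ℝ) (N : ℝ → ℝ)
    (φ : ℝ → ℝ) (x : ℝ) : ℝ :=
  N x * ∫ σ in Ici (0:ℝ), (∫ τ in Ici (0:ℝ), A τ x σ) * N σ * (1 - Real.exp (-(φ σ / N σ)))

theorem isSeqCompact_closure_of_exists_subseq_tendsto {Z : Type*} [PseudoMetricSpace Z]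
    {S : Set Z} (hS : ∀ z : ℕ → Z, (∀ n, z n ∈ S) →
      ∃ a, ∃ s : ℕ → ℕ, StrictMono s ∧ Tendsto (z ∘ s) atTop (𝓝 a)) :
    IsSeqCompact (closure S) := by
  intro y hy
  choose z hzS hyz using fun n => Metric.mem_closure_iff.1 (hy n) (1 / ((n : ℝ) + 1))
    Nat.one_div_pos_of_nat
  obtain ⟨a, s, hs, hza⟩ := hS z hzS
  refine ⟨a, mem_closure_of_tendsto hza (Eventually.of_forall fun k => hzS (s k)), s, hs, ?_⟩
  rw [tendsto_iff_dist_tendsto_zero] at hza ⊢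
  have hsmall : Tendsto (fun k => 1 / ((s k : ℝ) + 1)) atTop (𝓝 0) :=
    tendsto_one_div_add_atTop_nhds_zero_nat.comp hs.tendsto_atTop
  refine squeeze_zero (g := fun k => 1 / ((s k : ℝ) + 1) + dist (z (s k)) a)
    (fun _ => dist_nonneg) (fun k => ?_) (by simpa using hsmall.add hza)
  exact (dist_triangle _ (z (s k)) a).trans (add_le_add_left (hyz (s k)).le _)

section Lp

variable {X : Type*} [MeasurableSpace X] {μ : Measure X} {E : Type*} [NormedAddCommGroup E]

theorem MeasureTheory.Lp.exists_tendsto_of_tendsto_ae_of_dominated (F : ℕ → Lp E 1 μ)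
    {bound : X → ℝ} (hbound : Integrable bound μ) (hF : ∀ n, ∀ᵐ x ∂μ, ‖F n x‖ ≤ bound x)
    (hlim : ∀ᵐ x ∂μ, ∃ l, Tendsto (fun n => F n x) atTop (𝓝 l)) :
    ∃ G : Lp E 1 μ, Tendsto F atTop (𝓝 G) := by
  set f : X → E := fun x => limUnder atTop (fun n => F n x)
  have hFf : ∀ᵐ x ∂μ, Tendsto (fun n => F n x) atTop (𝓝 (f x)) := by
    filter_upwards [hlim] with x hx using tendsto_nhds_limUnder hx
  have hf_meas : AEStronglyMeasurable f μ :=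
    aestronglyMeasurable_of_tendsto_ae _ (fun n => (Lp.memLp (F n)).1) hFf
  have hf_bound : ∀ᵐ x ∂μ, ‖f x‖ ≤ bound x := by
    filter_upwards [hFf, ae_all_iff.2 hF] with x hx hxb
    exact le_of_tendsto hx.norm (Eventually.of_forall hxb)
  have hf : MemLp f 1 μ := memLp_one_iff_integrable.2 (hbound.mono' hf_meas hf_bound)
  refine ⟨hf.toLp f, ?_⟩
  have hF_eq : F = fun n => (Lp.memLp (F n)).toLp (F n) :=
    funext fun n => (Lp.toLp_coeFn _ _).symm
  rw [hF_eq, Lp.tendsto_Lp_iff_tendsto_eLpNorm'']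
  simp only [eLpNorm_one_eq_lintegral_enorm, Pi.sub_apply, ← ofReal_norm]
  exact tendsto_lintegral_norm_of_dominated_convergence (fun n => (Lp.memLp (F n)).1)
    hbound.2 hF hFf

theorem MeasureTheory.Lp.isCompact_closure_of_dominated {S : Set (Lp E 1 μ)} {bound : X → ℝ}
    (hbound : Integrable bound μ) (hS : ∀ F ∈ S, ∀ᵐ x ∂μ, ‖F x‖ ≤ bound x)
    (hseq : ∀ F : ℕ → Lp E 1 μ, (∀ n, F n ∈ S) → ∃ s : ℕ → ℕ, StrictMono s ∧
      ∀ᵐ x ∂μ, ∃ l, Tendsto (fun k => F (s k) x) atTop (𝓝 l)) :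
    IsCompact (closure S) := by
  refine (isSeqCompact_closure_of_exists_subseq_tendsto fun F hF => ?_).isCompact
  obtain ⟨s, hs, hlim⟩ := hseq F hF
  obtain ⟨G, hG⟩ := Lp.exists_tendsto_of_tendsto_ae_of_dominated (F ∘ s) hbound
    (fun k => hS _ (hF (s k))) hlim
  exact ⟨G, s, hs, hG⟩

end Lp

section WeakStar

variable {Y : Type*} [MeasurableSpace Y] {ν : Measure Y}

/-- Sequential Banach–Alaoglu in `(L¹)*`, applied to the unit ball of `L^∞`. -/
theorem exists_subseq_tendsto_integral_mul [IsSeparable ν] {u : ℕ → Y → ℝ}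
    (hu : ∀ n, AEStronglyMeasurable (u n) ν) (hu_le : ∀ n, ∀ᵐ y ∂ν, ‖u n y‖ ≤ 1) :
    ∃ s : ℕ → ℕ, StrictMono s ∧ ∀ h : Y → ℝ, Integrable h ν →
      ∃ l, Tendsto (fun k => ∫ y, u (s k) y * h y ∂ν) atTop (𝓝 l) := by
  have : Fact ((1 : ℝ≥0∞) ≠ ∞) := ⟨ENNReal.one_ne_top⟩
  let B := (ContinuousLinearMap.mul ℝ ℝ).lpPairing ν ∞ 1
  have hU : ∀ n, MemLp (u n) ∞ ν := fun n => memLp_top_of_bound (hu n) 1 (hu_le n)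
  let U : ℕ → Lp ℝ ∞ ν := fun n => (hU n).toLp (u n)
  have hB : ∀ n, B (U n) ∈ Metric.closedBall 0 ‖B‖ := by
    intro n
    rw [mem_closedBall_zero_iff]
    refine (B.le_opNorm (U n)).trans (mul_le_of_le_one_right (norm_nonneg _) ?_)
    rw [Lp.norm_toLp, eLpNorm_exponent_top]
    exact ENNReal.toReal_le_of_le_ofReal zero_le_one (eLpNormEssSup_le_of_ae_bound (hu_le n))
  obtain ⟨Λ, -, s, hs, hΛ⟩ := WeakDual.isSeqCompact_closedBall ℝ (Lp ℝ 1 ν) 0 ‖B‖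
    (x := fun n => StrongDual.toWeakDual (B (U n))) hB
  refine ⟨s, hs, fun h hh => ⟨Λ (hh.toL1 h), ?_⟩⟩
  convert ((WeakDual.eval_continuous (hh.toL1 h)).tendsto Λ).comp hΛ using 2 with k
  change _ = B (U (s k)) (hh.toL1 h)
  rw [ContinuousLinearMap.lpPairing_eq_integral]
  refine integral_congr_ae ?_
  filter_upwards [(hU (s k)).coeFn_toLp, hh.coeFn_toL1] with y hUy hhy
  simp only [ContinuousLinearMap.mul_apply', U, hUy, hhy]

end WeakStar

section KernelIntegral

variable {X Y : Type*} [MeasurableSpace Y] {ν : Measure Y} {K : X → Y → ℝ} {g : X → ℝ}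
  {h u : Y → ℝ}

noncomputable def kernelIntegral (K : X → Y → ℝ) (ν : Measure Y) (u : Y → ℝ) (x : X) : ℝ :=
  ∫ y, K x y * u y ∂ν

theorem norm_kernelIntegral_le {x : X} (hKx : ∀ᵐ y ∂ν, ‖K x y‖ ≤ g x * h y)
    (hh : Integrable h ν) (hu_le : ∀ᵐ y ∂ν, ‖u y‖ ≤ 1) :
    ‖kernelIntegral K ν u x‖ ≤ g x * ∫ y, h y ∂ν := by
  rw [← integral_const_mul]
  refine norm_integral_le_of_norm_le (hh.const_mul (g x)) ?_
  filter_upwards [hKx, hu_le] with y hKy huy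
  rw [norm_mul]
  exact (mul_le_of_le_one_right (norm_nonneg _) huy).trans hKy

theorem kernelIntegral_nonneg {x : X} (hKx : ∀ᵐ y ∂ν, 0 ≤ K x y) (hu : ∀ᵐ y ∂ν, 0 ≤ u y) :
    0 ≤ kernelIntegral K ν u x :=
  integral_nonneg_of_ae <| by filter_upwards [hKx, hu] with y hKy huy using mul_nonneg hKy huy

variable [MeasurableSpace X] {μ : Measure X}

theorem aestronglyMeasurable_kernelIntegral [SFinite ν]
    (hK : AEStronglyMeasurable (Function.uncurry K) (μ.prod ν))
    (hu : AEStronglyMeasurable u ν) :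
    AEStronglyMeasurable (kernelIntegral K ν u) μ :=
  (hK.mul hu.comp_snd).integral_prod_right'

theorem integrable_kernelIntegral [SFinite ν]
    (hK : AEStronglyMeasurable (Function.uncurry K) (μ.prod ν))
    (hKdom : ∀ᵐ x ∂μ, ∀ᵐ y ∂ν, ‖K x y‖ ≤ g x * h y) (hg : Integrable g μ)
    (hh : Integrable h ν) (hu : AEStronglyMeasurable u ν) (hu_le : ∀ᵐ y ∂ν, ‖u y‖ ≤ 1) :
    Integrable (kernelIntegral K ν u) μ :=
  (hg.mul_const _).mono' (aestronglyMeasurable_kernelIntegral hK hu) <| by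
    filter_upwards [hKdom] with x hKx using norm_kernelIntegral_le hKx hh hu_le

theorem integral_norm_kernelIntegral_le (hKdom : ∀ᵐ x ∂μ, ∀ᵐ y ∂ν, ‖K x y‖ ≤ g x * h y)
    (hg : Integrable g μ) (hh : Integrable h ν) (hu_le : ∀ᵐ y ∂ν, ‖u y‖ ≤ 1) :
    ∫ x, ‖kernelIntegral K ν u x‖ ∂μ ≤ (∫ x, g x ∂μ) * ∫ y, h y ∂ν := by
  rw [← integral_mul_const]
  refine integral_mono_of_nonneg (ae_of_all _ fun _ => norm_nonneg _) (hg.mul_const _) ?_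
  filter_upwards [hKdom] with x hKx using norm_kernelIntegral_le hKx hh hu_le

/-- Weak-* convergence of the densities `u` gives pointwise convergence of the images, which
the rank-one domination upgrades to convergence in `L¹`. -/
theorem isCompact_closure_kernelIntegral_image [SFinite ν] [IsSeparable ν]
    (hK : AEStronglyMeasurable (Function.uncurry K) (μ.prod ν))
    (hKdom : ∀ᵐ x ∂μ, ∀ᵐ y ∂ν, ‖K x y‖ ≤ g x * h y) (hg : Integrable g μ)
    (hh : Integrable h ν) :
    IsCompact (closure {F : Lp ℝ 1 μ | ∃ u : Y → ℝ, AEStronglyMeasurable u ν ∧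
      (∀ᵐ y ∂ν, ‖u y‖ ≤ 1) ∧ F =ᵐ[μ] kernelIntegral K ν u}) := by
  refine Lp.isCompact_closure_of_dominated (bound := fun x => g x * ∫ y, h y ∂ν)
    (hg.mul_const _) ?_ fun F hF => ?_
  · rintro F ⟨u, -, hu_le, hFu⟩
    filter_upwards [hFu, hKdom] with x hFx hKx
    exact hFx ▸ norm_kernelIntegral_le hKx hh hu_le
  · choose u hu hu_le hFu using hF
    obtain ⟨s, hs, hlim⟩ := exists_subseq_tendsto_integral_mul hu hu_le
    refine ⟨s, hs, ?_⟩
    filter_upwards [ae_all_iff.2 fun k => hFu (s k), hKdom, hK.prodMk_left]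
      with x hFx hKx hKx_meas
    obtain ⟨l, hl⟩ := hlim (K x) ((hh.const_mul (g x)).mono' hKx_meas hKx)
    refine ⟨l, ?_⟩
    simpa only [hFx, kernelIntegral, mul_comm (K x _)] using hl

end KernelIntegral

section HalfLine

variable {A : ℝ → ℝ → ℝ → ℝ} {N : ℝ → ℝ}

noncomputable def phiKernel (A : ℝ → ℝ → ℝ → ℝ) (N : ℝ → ℝ) (x σ : ℝ) : ℝ :=
  N x * (∫ τ in Ici (0:ℝ), A τ x σ) * N σ

noncomputable def saturation (N φ : ℝ → ℝ) (σ : ℝ) : ℝ :=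
  1 - Real.exp (-(φ σ / N σ))

theorem PhiOpHalfLine_eq_kernelIntegral (φ : ℝ → ℝ) :
    PhiOpHalfLine A N φ =
      kernelIntegral (phiKernel A N) (volume.restrict (Ici 0)) (saturation N φ) := by
  funext x
  rw [PhiOpHalfLine, kernelIntegral, ← integral_const_mul]
  congr 1 with σ
  rw [phiKernel, saturation]
  ring

theorem stronglyMeasurable_phiKernel (hN : Measurable N)
    (hA : Measurable (fun p : ℝ × ℝ × ℝ => A p.1 p.2.1 p.2.2)) :
    StronglyMeasurable (Function.uncurry (phiKernel A N)) := by
  have hΘ : StronglyMeasurable (fun p : ℝ × ℝ => ∫ τ in Ici (0:ℝ), A τ p.1 p.2) :=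
    (hA.comp (by fun_prop : Measurable fun q : (ℝ × ℝ) × ℝ => (q.2, q.1.1, q.1.2)))
      |>.stronglyMeasurable.integral_prod_right'
  exact ((hN.comp measurable_fst).stronglyMeasurable.mul hΘ).mul
    (hN.comp measurable_snd).stronglyMeasurable

theorem phiKernel_nonneg (hN : ∀ x, 0 ≤ N x) (hA : ∀ τ x σ, 0 ≤ A τ x σ) (x σ : ℝ) :
    0 ≤ phiKernel A N x σ :=
  mul_nonneg (mul_nonneg (hN x) (setIntegral_nonneg measurableSet_Ici fun τ _ => hA τ x σ))
    (hN σ)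

theorem norm_phiKernel_le (hN : ∀ x, 0 ≤ N x) (hA : ∀ τ x σ, 0 ≤ A τ x σ) {α : ℝ}
    {a b c : ℝ → ℝ} (hb : IntegrableOn b (Ici 0)) {x σ : ℝ}
    (hA_le : ∀ τ ∈ Ici (0:ℝ), A τ x σ ≤ α * (a x * b τ * c σ)) :
    ‖phiKernel A N x σ‖ ≤ α * (∫ τ in Ici (0:ℝ), b τ) * (a x * N x) * (c σ * N σ) := by
  have hΘ : ∫ τ in Ici (0:ℝ), A τ x σ ≤ ∫ τ in Ici (0:ℝ), α * a x * c σ * b τ :=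
    integral_mono_of_nonneg (ae_of_all _ fun τ => hA τ x σ) (hb.const_mul _) <|
      (ae_restrict_iff' measurableSet_Ici).2 <| ae_of_all _ fun τ hτ =>
        (hA_le τ hτ).trans_eq (by ring)
  rw [integral_const_mul] at hΘ
  calc ‖phiKernel A N x σ‖
      = N x * (∫ τ in Ici (0:ℝ), A τ x σ) * N σ := Real.norm_of_nonneg (phiKernel_nonneg hN hA x σ)
    _ ≤ N x * (α * a x * c σ * ∫ τ in Ici (0:ℝ), b τ) * N σ := by gcongr <;> exact hN _
    _ = _ := by ring

theorem aestronglyMeasurable_saturation {μ : Measure ℝ} {φ : ℝ → ℝ} (hN : Measurable N)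
    (hφ : AEMeasurable φ μ) : AEStronglyMeasurable (saturation N φ) μ :=
  (by unfold saturation; fun_prop : AEMeasurable (saturation N φ) μ).aestronglyMeasurable

theorem saturation_nonneg {φ : ℝ → ℝ} {σ : ℝ} (hN : 0 ≤ N σ) (hφ : 0 ≤ φ σ) :
    0 ≤ saturation N φ σ :=
  sub_nonneg.2 (Real.exp_le_one_iff.2 (neg_nonpos.2 (div_nonneg hφ hN)))

theorem norm_saturation_le_one {φ : ℝ → ℝ} {σ : ℝ} (hN : 0 ≤ N σ) (hφ : 0 ≤ φ σ) :
    ‖saturation N φ σ‖ ≤ 1 := by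
  rw [Real.norm_of_nonneg (saturation_nonneg hN hφ)]
  exact sub_le_self _ (Real.exp_pos _).le

end HalfLine

theorem Phi_image_relatively_compact_general
    (N : ℝ → ℝ) (hNmeas : Measurable N) (hNnn : ∀ x, 0 ≤ N x)
    (A : ℝ → ℝ → ℝ → ℝ)
    (hAmeas : Measurable (fun p : ℝ × ℝ × ℝ => A p.1 p.2.1 p.2.2))
    (hAnn : ∀ τ x σ, 0 ≤ A τ x σ)
    -- Assumption 1(1)
    (α : ℝ)
    (a b c : ℝ → ℝ)
    (haN : IntegrableOn (fun x => a x * N x) (Ici 0))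
    (hbint : IntegrableOn b (Ici 0))
    (hcN : IntegrableOn (fun x => c x * N x) (Ici 0))
    (hAbound : ∀ τ ∈ Ici (0:ℝ), ∀ x ∈ Ici (0:ℝ), ∀ σ ∈ Ici (0:ℝ),
      a x * b τ * c σ ≤ A τ x σ ∧ A τ x σ ≤ α * (a x * b τ * c σ)) :
    (∀ φ : ℝ → ℝ, IntegrableOn φ (Ici 0) →
      (∀ᵐ x ∂(volume.restrict (Ici (0:ℝ))), 0 ≤ φ x) →
      IntegrableOn (PhiOpHalfLine A N φ) (Ici 0) ∧
      (∀ᵐ x ∂(volume.restrict (Ici (0:ℝ))), 0 ≤ PhiOpHalfLine A N φ x) ∧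
      (∫ x in Ici (0:ℝ), |PhiOpHalfLine A N φ x|)
        ≤ α * (∫ τ in Ici (0:ℝ), b τ) * (∫ x in Ici (0:ℝ), a x * N x)
            * ∫ x in Ici (0:ℝ), c x * N x) ∧
    IsCompact (closure {g : Lp ℝ 1 (volume.restrict (Ici (0:ℝ))) |
      ∃ φ : ℝ → ℝ, IntegrableOn φ (Ici 0) ∧
        (∀ᵐ x ∂(volume.restrict (Ici (0:ℝ))), 0 ≤ φ x) ∧
        ⇑g =ᵐ[volume.restrict (Ici (0:ℝ))] PhiOpHalfLine A N φ}) := by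
  set μ := volume.restrict (Ici (0:ℝ))
  have hK : AEStronglyMeasurable (Function.uncurry (phiKernel A N)) (μ.prod μ) :=
    (stronglyMeasurable_phiKernel hNmeas hAmeas).aestronglyMeasurable
  have hKdom : ∀ᵐ x ∂μ, ∀ᵐ σ ∂μ, ‖phiKernel A N x σ‖
      ≤ α * (∫ τ in Ici (0:ℝ), b τ) * (a x * N x) * (c σ * N σ) := by
    filter_upwards [ae_restrict_mem measurableSet_Ici] with x hx
    filter_upwards [ae_restrict_mem measurableSet_Ici] with σ hσ
    exact norm_phiKernel_le hNnn hAnn hbint fun τ hτ => (hAbound τ hτ x hx σ hσ).2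
  have hg := haN.const_mul (α * ∫ τ in Ici (0:ℝ), b τ)
  have hu_le : ∀ φ : ℝ → ℝ, (∀ᵐ x ∂μ, 0 ≤ φ x) → ∀ᵐ σ ∂μ, ‖saturation N φ σ‖ ≤ 1 :=
    fun φ hφ0 => hφ0.mono fun σ hσ => norm_saturation_le_one (hNnn σ) hσ
  refine ⟨fun φ hφ hφ0 => ?_, ?_⟩
  · rw [PhiOpHalfLine_eq_kernelIntegral]
    refine ⟨integrable_kernelIntegral hK hKdom hg hcN
        (aestronglyMeasurable_saturation hNmeas hφ.aemeasurable) (hu_le φ hφ0),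
      ae_of_all _ fun x => kernelIntegral_nonneg (ae_of_all _ (phiKernel_nonneg hNnn hAnn x))
        (hφ0.mono fun σ hσ => saturation_nonneg (hNnn σ) hσ), ?_⟩
    simp_rw [← Real.norm_eq_abs]
    refine (integral_norm_kernelIntegral_le hKdom hg hcN (hu_le φ hφ0)).trans_eq ?_
    rw [integral_const_mul]
  · refine (isCompact_closure_kernelIntegral_image hK hKdom hg hcN).of_isClosed_subset
      isClosed_closure (closure_mono ?_)
    rintro F ⟨φ, hφ, hφ0, hF⟩
    exact ⟨_, aestronglyMeasurable_saturation hNmeas hφ.aemeasurable, hu_le φ hφ0,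
      PhiOpHalfLine_eq_kernelIntegral (A := A) φ ▸ hF⟩

/-- for `Ω = [0,∞)`, under Assumptions 1(1) and 2, `Φ` maps `L¹₊(Ω)` into the
bounded set `{φ : ‖φ‖₁ ≤ α L (∫ a N)(∫ c N)}` and the image `Φ(L¹₊(Ω))` has compact closure
in `L¹(Ω)`. -/
theorem Phi_image_relatively_compact
    (N : ℝ → ℝ) (hNmeas : Measurable N) (hNnn : ∀ x, 0 ≤ N x)
    (hNint : IntegrableOn N (Ici 0))
    (hNpos : ∀ᵐ x ∂(volume.restrict (Ici (0:ℝ))), 0 < N x)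
    (A : ℝ → ℝ → ℝ → ℝ)
    (hAmeas : Measurable (fun p : ℝ × ℝ × ℝ => A p.1 p.2.1 p.2.2))
    (hAnn : ∀ τ x σ, 0 ≤ A τ x σ)
    -- Assumption 1(1)
    (α : ℝ) (hα : 1 < α)
    (a b c : ℝ → ℝ)
    (hameas : Measurable a) (hbmeas : Measurable b) (hcmeas : Measurable c)
    (hann : ∀ x, 0 ≤ a x) (hbnn : ∀ τ, 0 ≤ b τ) (hcnn : ∀ σ, 0 ≤ c σ)
    (haN : IntegrableOn (fun x => a x * N x) (Ici 0))
    (hbint : IntegrableOn b (Ici 0))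
    (hcN : IntegrableOn (fun x => c x * N x) (Ici 0))
    (hc2N : IntegrableOn (fun x => c x ^ 2 * N x) (Ici 0))
    (hAbound : ∀ τ ∈ Ici (0:ℝ), ∀ x ∈ Ici (0:ℝ), ∀ σ ∈ Ici (0:ℝ),
      a x * b τ * c σ ≤ A τ x σ ∧ A τ x σ ≤ α * (a x * b τ * c σ))
    -- Assumption 2
    (haNpos : ∀ f : ℝ → ℝ, Measurable f → (∀ x, 0 ≤ f x) → (∃ M, ∀ x, f x ≤ M) →
      ¬ f =ᵐ[volume.restrict (Ici (0:ℝ))] 0 →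
      0 < ∫ x in Ici (0:ℝ), f x * (a x * N x))
    (hcbdd : ∃ M, ∀ x, c x ≤ M)
    (hcpos : ∀ φ : ℝ → ℝ, IntegrableOn φ (Ici 0) →
      (∀ᵐ x ∂(volume.restrict (Ici (0:ℝ))), 0 ≤ φ x) →
      ¬ φ =ᵐ[volume.restrict (Ici (0:ℝ))] 0 →
      0 < ∫ x in Ici (0:ℝ), c x * φ x)
    (hΘshift : TendstoUniformlyOn
      (fun (h : ℝ) (σ : ℝ) => ∫ x in Ici (0:ℝ),
        |indicator (Ici (0:ℝ)) (fun y => N y * ∫ τ in Ici (0:ℝ), A τ y σ) (x + h)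
          - N x * ∫ τ in Ici (0:ℝ), A τ x σ|)
      (fun _ => 0) (nhds (0:ℝ)) (Ici 0)) :
    (∀ φ : ℝ → ℝ, IntegrableOn φ (Ici 0) →
      (∀ᵐ x ∂(volume.restrict (Ici (0:ℝ))), 0 ≤ φ x) →
      IntegrableOn (PhiOpHalfLine A N φ) (Ici 0) ∧
      (∀ᵐ x ∂(volume.restrict (Ici (0:ℝ))), 0 ≤ PhiOpHalfLine A N φ x) ∧
      (∫ x in Ici (0:ℝ), |PhiOpHalfLine A N φ x|)
        ≤ α * (∫ τ in Ici (0:ℝ), b τ) * (∫ x in Ici (0:ℝ), a x * N x)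
            * ∫ x in Ici (0:ℝ), c x * N x) ∧
    IsCompact (closure {g : Lp ℝ 1 (volume.restrict (Ici (0:ℝ))) |
      ∃ φ : ℝ → ℝ, IntegrableOn φ (Ici 0) ∧
        (∀ᵐ x ∂(volume.restrict (Ici (0:ℝ))), 0 ≤ φ x) ∧
        ⇑g =ᵐ[volume.restrict (Ici (0:ℝ))] PhiOpHalfLine A N φ}) :=
  Phi_image_relatively_compact_general N hNmeas hNnn A hAmeas hAnn α a b c haN hbint hcN hAbound
end
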